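/- arXiv:2409.19105 — 12 statements merged into one kernel-verified Lean document; each statement's English description precedes it below -/
import Mathlib

section
/- Let n ≥ 1 and k ≥ 2, and let p, q : Fin k → EuclideanSpace ℝ (Fin n) be two collections of points with the same centroid, i.e. ∑ i, p i = ∑ i, q i. If the last point q k lies in the convex hull (over ℝ) of the set {p 1, …, p k}, then the centroid (1/(k−1)) • ∑_{i=1}^{k−1} q i of the remaining points q 1, …, q_{k−1} also lies in the convex hull of {p 1, …, p k}. (Paper: Lemma 3.5.) -/
/-! Write the last point as a convex combination `q_last = ∑ wᵢ pᵢ`. Equal centroids give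
`∑_{i<k-1} qᵢ = ∑ pᵢ - q_last = ∑ (1 - wᵢ) pᵢ`, and the weights `(1 - wᵢ) / (k - 1)` are
nonnegative (as `wᵢ ≤ 1`) and sum to `(k - 1) / (k - 1) = 1`. -/

open Set

section ConvexHull

variable {R E ι : Type*} [Field R] [LinearOrder R] [IsStrictOrderedRing R]
  [AddCommGroup E] [Module R E] [Fintype ι]

theorem convexHull_range_eq_image_stdSimplex (v : ι → E) :
    convexHull R (range v) = (fun w : ι → R ↦ ∑ i, w i • v i) '' stdSimplex R ι := by
  classical
  have hv :
      range v = Fintype.linearCombination R v '' range fun i j ↦ if i = j then 1 else 0 := by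
    rw [← range_comp]
    congr 1
    ext i
    simp [Fintype.linearCombination_apply, ite_smul]
  rw [← convexHull_basis_eq_stdSimplex, hv, ← LinearMap.image_convexHull]
  rfl

theorem inv_card_sub_one_smul_one_sub_mem_stdSimplex (hι : 1 < Fintype.card ι) {w : ι → R}
    (hw : w ∈ stdSimplex R ι) :
    ((Fintype.card ι : R) - 1)⁻¹ • (1 - w) ∈ stdSimplex R ι := by
  have hcard : (0 : R) < Fintype.card ι - 1 := by
    rw [sub_pos, Nat.one_lt_cast]
    exact hι
  refine ⟨fun i ↦ ?_, ?_⟩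
  · exact smul_nonneg (inv_nonneg.mpr hcard.le)
      (sub_nonneg.mpr (mem_Icc_of_mem_stdSimplex hw i).2)
  · simp only [Pi.smul_apply, Pi.sub_apply, Pi.one_apply, smul_eq_mul, ← Finset.mul_sum,
      Finset.sum_sub_distrib, hw.2, Finset.sum_const, Finset.card_univ, nsmul_eq_mul, mul_one]
    exact inv_mul_cancel₀ hcard.ne'

theorem inv_card_sub_one_smul_sum_sub_mem_convexHull_range (hι : 1 < Fintype.card ι)
    {v : ι → E} {x : E} (hx : x ∈ convexHull R (range v)) :
    ((Fintype.card ι : R) - 1)⁻¹ • (∑ i, v i - x) ∈ convexHull R (range v) := by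
  rw [convexHull_range_eq_image_stdSimplex] at hx ⊢
  obtain ⟨w, hw, rfl⟩ := hx
  refine ⟨_, inv_card_sub_one_smul_one_sub_mem_stdSimplex hι hw, ?_⟩
  simp only [Pi.smul_apply, Pi.sub_apply, Pi.one_apply, smul_eq_mul, mul_smul, sub_smul,
    one_smul, ← Finset.smul_sum, Finset.sum_sub_distrib]

end ConvexHull

theorem Fin.sum_univ_eq_sum_castLE_add_last {M : Type*} [AddCommMonoid M] {k : ℕ} (hk : 1 ≤ k)
    (f : Fin k → M) :
    ∑ i, f i = ∑ i : Fin (k - 1), f (Fin.castLE (Nat.sub_le k 1) i) + f ⟨k - 1, by omega⟩ := by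
  obtain ⟨m, rfl⟩ : ∃ m, k = m + 1 := ⟨k - 1, by omega⟩
  exact Fin.sum_univ_castSucc f

/-- **Lemma 3.5.** Two collections of `k` points in `ℝⁿ` with the same centroid: if the
last point of `q` lies in the convex hull of the points of `p`, then the centroid of the
remaining `k - 1` points of `q` also lies in that convex hull. -/
theorem centroid_mem_convexHull_of_last_mem
    (n k : ℕ) (hk : 2 ≤ k)
    (p q : Fin k → EuclideanSpace ℝ (Fin n))
    (hsum : ∑ i, p i = ∑ i, q i)
    (hq : q ⟨k - 1, by omega⟩ ∈ convexHull ℝ (Set.range p)) :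
    (1 / ((k : ℝ) - 1)) • ∑ i : Fin (k - 1), q (Fin.castLE (Nat.sub_le k 1) i) ∈
      convexHull ℝ (Set.range p) := by
  have h :=
    inv_card_sub_one_smul_sum_sub_mem_convexHull_range (by rw [Fintype.card_fin]; omega) hq
  rwa [Fintype.card_fin, hsum, Fin.sum_univ_eq_sum_castLE_add_last (by omega),
    add_sub_cancel_right, ← one_div] at h
end

section
/- Separating Axis Theorem for planar polygons: let S₁ and S₂ be nonempty finite subsets of the Euclidean plane ℝ² such that the convex hulls (over ℝ) of S₁ and S₂ are disjoint, and assume that at least one of S₁, S₂ contains two distinct points. Then there exist a nonzero vector v ∈ ℝ² and two distinct points X ≠ Y such that ⟨v, X⟩ = ⟨v, Y⟩ and either (i) X, Y ∈ S₁, ⟨v, z⟩ ≤ ⟨v, X⟩ for every z in the convex hull of S₁, and ⟨v, X⟩ ≤ ⟨v, z⟩ for every z in the convex hull of S₂, or (ii) X, Y ∈ S₂, ⟨v, z⟩ ≤ ⟨v, X⟩ for every z in the convex hull of S₂, and ⟨v, X⟩ ≤ ⟨v, z⟩ for every z in the convex hull of S₁. In other words, the line through two points of one of the two sets, with v an outer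 normal to the polygon spanned by that set, (weakly) separates the two convex hulls. (Paper: Theorem 3.2.) -/
/-!
By Hahn–Banach the finite difference set `T = S₂ - S₁` lies in an open half-plane `⟪u, ·⟫ > 0`.
Let `x` minimise `⟪u, ·⟫` on `T` and take `k ≠ 0` orthogonal to `x`. The normals `u + c • k` all
take the value `⟪u, x⟫ > 0` at `x`, so as `c` grows the supporting line through `x` pivots about
`x` with the origin kept on the other side; the first `c ≥ 0` at which it meets another point of
`T` yields a line through two points of `T` with `T` on one side and the origin on the other
(if `⟪k, ·⟫` vanishes on `T`, the normal `k` already works). A point `b - a` minimising `⟪v, ·⟫`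
on `S₂ - S₁` has `a` maximising `⟪v, ·⟫` on `S₁` and `b` minimising it on `S₂`, so two such
points with `a₁ ≠ a₂` or `b₁ ≠ b₂` give the separating edge of `conv S₁` or `conv S₂`.
-/

open RealInnerProductSpace
open scoped Pointwise

lemma Set.Nontrivial.sub_of_or {G : Type*} [AddGroup G] {s t : Set G} (hs : s.Nonempty)
    (ht : t.Nonempty) (h : s.Nontrivial ∨ t.Nontrivial) : (s - t).Nontrivial := by
  rcases h with ⟨x, hx, y, hy, hxy⟩ | ⟨x, hx, y, hy, hxy⟩
  · obtain ⟨c, hc⟩ := ht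
    exact ⟨x - c, Set.sub_mem_sub hx hc, y - c, Set.sub_mem_sub hy hc, by simpa⟩
  · obtain ⟨c, hc⟩ := hs
    exact ⟨c - x, Set.sub_mem_sub hc hx, c - y, Set.sub_mem_sub hc hy, by simpa⟩

lemma exists_add_mul_nonneg_eq_zero {ι : Type*} {s : Set ι} (hs : s.Finite) {a b : ι → ℝ}
    (ha : ∀ i ∈ s, 0 ≤ a i) (hb : ∃ i ∈ s, b i < 0) :
    ∃ c : ℝ, (∀ i ∈ s, 0 ≤ a i + c * b i) ∧ ∃ i ∈ s, b i < 0 ∧ a i + c * b i = 0 := by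
  obtain ⟨j, ⟨hj, hbj⟩, hjmin⟩ := Set.exists_min_image {i | i ∈ s ∧ b i < 0}
    (fun i => a i / -b i) (hs.subset fun i hi => hi.1) hb
  refine ⟨a j / -b j, fun i hi => ?_, j, hj, hbj, by field_simp [hbj.ne]; ring⟩
  rcases lt_or_ge (b i) 0 with hbi | hbi
  · have := (le_div_iff₀ (neg_pos.2 hbi)).1 (hjmin i ⟨hi, hbi⟩)
    linarith
  · exact add_nonneg (ha i hi) (mul_nonneg (div_nonneg (ha j hj) (neg_pos.2 hbj).le) hbi)

variable {E : Type*} [NormedAddCommGroup E] [InnerProductSpace ℝ E]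

lemma exists_inner_lt_of_disjoint_convexHull [CompleteSpace E] {S₁ S₂ : Set E}
    (h₁ : S₁.Finite) (h₂ : S₂.Finite) (hdisj : Disjoint (convexHull ℝ S₁) (convexHull ℝ S₂)) :
    ∃ u : E, ∀ a ∈ S₁, ∀ b ∈ S₂, ⟪u, a⟫ < ⟪u, b⟫ := by
  obtain ⟨f, c, d, hc, hcd, hd⟩ := geometric_hahn_banach_compact_closed
    (convex_convexHull ℝ S₁) (h₁.isCompact_convexHull (𝕜 := ℝ))
    (convex_convexHull ℝ S₂) (h₂.isCompact_convexHull (𝕜 := ℝ)).isClosed hdisj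
  refine ⟨(InnerProductSpace.toDual ℝ E).symm f, fun a ha b hb => ?_⟩
  simp only [InnerProductSpace.toDual_symm_apply]
  linarith [hc a (subset_convexHull ℝ S₁ ha), hd b (subset_convexHull ℝ S₂ hb)]

lemma exists_ne_zero_inner_eq_zero [FiniteDimensional ℝ E] (hE : 2 ≤ Module.finrank ℝ E)
    (x : E) : ∃ k ≠ (0 : E), ⟪k, x⟫ = 0 := by
  have hspan : (ℝ ∙ x)ᗮ ≠ ⊥ := by
    rw [Ne, Submodule.orthogonal_eq_bot_iff]
    intro h
    have := finrank_span_le_card (R := ℝ) ({x} : Set E)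
    rw [h, finrank_top] at this
    simp only [Set.toFinset_singleton, Finset.card_singleton] at this
    omega
  obtain ⟨k, hk, hk0⟩ := Submodule.exists_mem_ne_zero_of_ne_bot hspan
  exact ⟨k, hk0, Submodule.mem_orthogonal_singleton_iff_inner_left.1 hk⟩

lemma exists_ne_isMinOn_add_smul {T : Set E} (hT : T.Finite) {u k x : E}
    (hx : IsMinOn (⟪u, ·⟫) T x) (hkx : ⟪k, x⟫ = 0) (hk : ∃ t ∈ T, ⟪k, t⟫ < 0) :
    ∃ c : ℝ, ∃ y ∈ T, y ≠ x ∧ IsMinOn (⟪u + c • k, ·⟫) T x ∧ IsMinOn (⟪u + c • k, ·⟫) T y := by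
  obtain ⟨c, hc, y, hy, hky, hcy⟩ := exists_add_mul_nonneg_eq_zero hT
    (a := fun t => ⟪u, t - x⟫) (b := fun t => ⟪k, t⟫)
    (fun t ht => by simpa [inner_sub_right] using isMinOn_iff.1 hx t ht) hk
  have hdiff : ∀ t, ⟪u + c • k, t⟫ - ⟪u + c • k, x⟫ = ⟪u, t - x⟫ + c * ⟪k, t⟫ := by
    intro t
    simp only [inner_add_left, real_inner_smul_left, inner_sub_right, hkx]
    ring
  have hxmin : IsMinOn (⟪u + c • k, ·⟫) T x := isMinOn_iff.2 fun t ht => by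
    linarith [hdiff t, hc t ht]
  refine ⟨c, y, hy, fun hyx => ?_, hxmin, isMinOn_iff.2 fun t ht => ?_⟩
  · rw [hyx, hkx] at hky
    exact lt_irrefl _ hky
  · linarith [hdiff t, hdiff y, hc t ht]

lemma exists_ne_zero_isMinOn_pair [FiniteDimensional ℝ E] (hE : 2 ≤ Module.finrank ℝ E)
    {T : Set E} (hT : T.Finite) (hT₂ : T.Nontrivial) {u : E} (hu : ∀ t ∈ T, 0 < ⟪u, t⟫) :
    ∃ v ≠ (0 : E), ∃ x ∈ T, ∃ y ∈ T, x ≠ y ∧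
      IsMinOn (⟪v, ·⟫) T x ∧ IsMinOn (⟪v, ·⟫) T y ∧ 0 ≤ ⟪v, x⟫ := by
  obtain ⟨x, hx, hxmin⟩ := Set.exists_min_image T (⟪u, ·⟫) hT hT₂.nonempty
  obtain ⟨k, hk0, hkx⟩ := exists_ne_zero_inner_eq_zero hE x
  by_cases hflat : ∀ t ∈ T, ⟪k, t⟫ = 0
  · obtain ⟨y, hy, z, hz, hyz⟩ := hT₂
    have hmin : ∀ t ∈ T, IsMinOn (⟪k, ·⟫) T t :=
      fun t ht => isMinOn_iff.2 fun s hs => by simp [hflat t ht, hflat s hs]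
    exact ⟨k, hk0, y, hy, z, hz, hyz, hmin y hy, hmin z hz, (hflat y hy).ge⟩
  obtain ⟨k', hk'x, hk'⟩ : ∃ k' : E, ⟪k', x⟫ = 0 ∧ ∃ t ∈ T, ⟪k', t⟫ < 0 := by
    push Not at hflat
    obtain ⟨t, ht, hkt⟩ := hflat
    rcases hkt.lt_or_gt with hlt | hgt
    · exact ⟨k, hkx, t, ht, hlt⟩
    · exact ⟨-k, by simp [hkx], t, ht, by simpa using hgt⟩
  obtain ⟨c, y, hy, hyx, hxmin', hymin⟩ :=
    exists_ne_isMinOn_add_smul hT (isMinOn_iff.2 hxmin) hk'x hk'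
  have hv : ⟪u + c • k', x⟫ = ⟪u, x⟫ := by
    simp only [inner_add_left, real_inner_smul_left, hk'x, mul_zero, add_zero]
  refine ⟨u + c • k', fun h => (hu x hx).ne' ?_, x, hx, y, hy, hyx.symm, hxmin', hymin,
    hv ▸ (hu x hx).le⟩
  rw [← hv, h, inner_zero_left]

lemma isMinOn_inner_of_isMinOn_sub {S₁ S₂ : Set E} {v a b : E} (ha : a ∈ S₁) (hb : b ∈ S₂)
    (h : IsMinOn (⟪v, ·⟫) (S₂ - S₁) (b - a)) : IsMinOn (⟪v, ·⟫) S₂ b ∧ IsMaxOn (⟪v, ·⟫) S₁ a := by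
  constructor
  · refine isMinOn_iff.2 fun b' hb' => ?_
    have := isMinOn_iff.1 h _ (Set.sub_mem_sub hb' ha)
    simp only [inner_sub_right] at this
    linarith
  · refine isMaxOn_iff.2 fun a' ha' => ?_
    have := isMinOn_iff.1 h _ (Set.sub_mem_sub hb ha')
    simp only [inner_sub_right] at this
    linarith

lemma inner_le_of_mem_convexHull {S S' : Set E} {v X : E} (hX : IsMaxOn (⟪v, ·⟫) S X)
    (hS' : ∀ b ∈ S', ⟪v, X⟫ ≤ ⟪v, b⟫) :
    (∀ z ∈ convexHull ℝ S, ⟪v, z⟫ ≤ ⟪v, X⟫) ∧ ∀ z ∈ convexHull ℝ S', ⟪v, X⟫ ≤ ⟪v, z⟫ :=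
  ⟨fun _ hz => convexHull_min (isMaxOn_iff.1 hX)
      (convex_halfSpace_le (innerₛₗ ℝ v).isLinear _) hz,
    fun _ hz => convexHull_min hS' (convex_halfSpace_ge (innerₛₗ ℝ v).isLinear _) hz⟩

/-- **Separating Axis Theorem (Theorem 3.2).** If the convex hulls of two nonempty finite
sets `S₁`, `S₂` in the Euclidean plane are disjoint, and one of the sets contains two
distinct points, then the two convex hulls can be (weakly) separated by a line through two
distinct points of one of the sets, with separating direction `v` an outer normal to the
polygon spanned by that set. -/
theorem separating_axis_theorem
    (S₁ S₂ : Set (EuclideanSpace ℝ (Fin 2)))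
    (h₁ : S₁.Finite) (h₂ : S₂.Finite)
    (hne₁ : S₁.Nonempty) (hne₂ : S₂.Nonempty)
    (hdisj : Disjoint (convexHull ℝ S₁) (convexHull ℝ S₂))
    (htwo : (∃ x ∈ S₁, ∃ y ∈ S₁, x ≠ y) ∨ (∃ x ∈ S₂, ∃ y ∈ S₂, x ≠ y)) :
    ∃ (v X Y : EuclideanSpace ℝ (Fin 2)), v ≠ 0 ∧ X ≠ Y ∧ ⟪v, X⟫ = ⟪v, Y⟫ ∧
      ((X ∈ S₁ ∧ Y ∈ S₁ ∧
          (∀ z ∈ convexHull ℝ S₁, ⟪v, z⟫ ≤ ⟪v, X⟫) ∧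
          (∀ z ∈ convexHull ℝ S₂, ⟪v, X⟫ ≤ ⟪v, z⟫)) ∨
        (X ∈ S₂ ∧ Y ∈ S₂ ∧
          (∀ z ∈ convexHull ℝ S₂, ⟪v, z⟫ ≤ ⟪v, X⟫) ∧
          (∀ z ∈ convexHull ℝ S₁, ⟪v, X⟫ ≤ ⟪v, z⟫))) := by
  obtain ⟨u, hu⟩ := exists_inner_lt_of_disjoint_convexHull h₁ h₂ hdisj
  have hu' : ∀ t ∈ S₂ - S₁, 0 < ⟪u, t⟫ := by
    rintro _ ⟨b, hb, a, ha, rfl⟩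
    simpa [inner_sub_right] using hu a ha b hb
  obtain ⟨v, hv, _, ⟨b₁, hb₁, a₁, ha₁, rfl⟩, _, ⟨b₂, hb₂, a₂, ha₂, rfl⟩, hne, hmin₁, hmin₂,
      hnonneg⟩ := exists_ne_zero_isMinOn_pair finrank_euclideanSpace_fin.ge (h₂.sub h₁)
    (Set.Nontrivial.sub_of_or hne₂ hne₁ htwo.symm) hu'
  obtain ⟨hb₁min, ha₁max⟩ := isMinOn_inner_of_isMinOn_sub ha₁ hb₁ hmin₁
  obtain ⟨hb₂min, ha₂max⟩ := isMinOn_inner_of_isMinOn_sub ha₂ hb₂ hmin₂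
  have hab : ⟪v, a₁⟫ ≤ ⟪v, b₁⟫ := by simpa [inner_sub_right] using hnonneg
  by_cases hb : b₁ = b₂
  · subst hb
    refine ⟨v, a₁, a₂, hv, fun h => hne (by rw [h]),
      le_antisymm (isMaxOn_iff.1 ha₂max a₁ ha₁) (isMaxOn_iff.1 ha₁max a₂ ha₂),
      Or.inl ⟨ha₁, ha₂, inner_le_of_mem_convexHull ha₁max fun b hb =>
        hab.trans (isMinOn_iff.1 hb₁min b hb)⟩⟩
  · have hb₁max : IsMaxOn (⟪-v, ·⟫) S₂ b₁ := by simpa only [inner_neg_left] using hb₁min.neg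
    refine ⟨-v, b₁, b₂, neg_ne_zero.2 hv, hb, ?_, Or.inr ⟨hb₁, hb₂,
      inner_le_of_mem_convexHull hb₁max fun a ha => ?_⟩⟩
    · rw [inner_neg_left, inner_neg_left, le_antisymm (isMinOn_iff.1 hb₁min b₂ hb₂)
        (isMinOn_iff.1 hb₂min b₁ hb₁)]
    · simp only [inner_neg_left, neg_le_neg_iff]
      exact (isMaxOn_iff.1 ha₁max a ha).trans hab
end

section
/- Let P, Q : Fin 3 → ℝ² be points of the Euclidean plane with P 1 + P 2 + P 3 = Q 1 + Q 2 + Q 3 (equal centroids). If for some pair of distinct indices i ≠ j the closed segment [Q i, Q j] is disjoint from the convex hull of {P 1, P 2, P 3}, then the remaining point Q k (where {i, j, k} = {1, 2, 3}) does not lie in the convex hull of {P 1, P 2, P 3}. (This is the redundancy of condition (3.2) established in Corollary 3.8 via Lemma 3.5.) -/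
/-- **(Corollary 3.8 via Lemma 3.5.)** Two triples of points in the plane with equal sums:
if the closed segment between `Q i` and `Q j` (for `i ≠ j`) is disjoint from the convex
hull of `{P 1, P 2, P 3}`, then the remaining point `Q k` also lies outside this convex
hull. -/
theorem remaining_point_not_mem_convexHull
    (P Q : Fin 3 → EuclideanSpace ℝ (Fin 2))
    (hsum : P 0 + P 1 + P 2 = Q 0 + Q 1 + Q 2)
    (i j : Fin 3) (hij : i ≠ j)
    (hdisj : Disjoint (segment ℝ (Q i) (Q j)) (convexHull ℝ (Set.range P)))
    (k : Fin 3) (hki : k ≠ i) (hkj : k ≠ j) :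
    Q k ∉ convexHull ℝ (Set.range P) := by
  intro hQk
  -- extract convex combination representation of Q k
  rw [convexHull_range_eq_exists_affineCombination] at hQk
  obtain ⟨s, w0, hw0₀, hw0₁, hw0c⟩ := hQk
  set w : Fin 3 → ℝ := (s : Set (Fin 3)).indicator w0 with hw
  have hw₀ : ∀ m, 0 ≤ w m :=
    fun m => Set.indicator_nonneg (fun a ha => hw0₀ a (by exact_mod_cast ha)) m
  have hw₁ : ∑ m, w m = 1 := by
    rw [hw, Finset.sum_indicator_subset _ (Finset.subset_univ s)] at *
    · exact hw0₁
  have hwc : ∑ m, w m • P m = Q k := by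
    have := Finset.affineCombination_indicator_subset w0 P (Finset.subset_univ s)
    rw [hw0c, ← hw] at this
    rw [this, Finset.affineCombination_eq_linear_combination _ _ _ hw₁]
  -- each weight is at most 1
  have hwle : ∀ m, w m ≤ 1 := by
    intro m
    rw [← hw₁]
    exact Finset.single_le_sum (fun n _ => hw₀ n) (Finset.mem_univ m)
  -- the midpoint of Q i, Q j
  set M : EuclideanSpace ℝ (Fin 2) := (1/2 : ℝ) • Q i + (1/2 : ℝ) • Q j with hM
  have hMseg : M ∈ segment ℝ (Q i) (Q j) :=
    ⟨1/2, 1/2, by norm_num, by norm_num, by norm_num, rfl⟩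
  -- sum of Q's in any order
  have hQsum : Q i + Q j + Q k = Q 0 + Q 1 + Q 2 := by
    fin_cases i <;> fin_cases j <;> fin_cases k <;> simp_all <;> abel
  -- M is a convex combination of the P's
  have hsum2 : ∑ m, ((1 - w m) / 2) = 1 := by
    rw [← Finset.sum_div, Finset.sum_sub_distrib, hw₁]
    norm_num
  have hMhull : M ∈ convexHull ℝ (Set.range P) := by
    have key : M = ∑ m, ((1 - w m) / 2) • P m := by
      have h1 : ∑ m, ((1 - w m) / 2) • P m
          = (1/2 : ℝ) • ((P 0 + P 1 + P 2) - ∑ m, w m • P m) := by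
        rw [Fin.sum_univ_three, Fin.sum_univ_three]
        simp only [sub_smul, smul_sub, smul_add, div_eq_inv_mul, mul_smul, one_smul]
        abel
      rw [h1, hwc, hsum, ← hQsum, hM]
      simp only [smul_add, smul_sub]
      abel
    rw [key]
    have h2 : ∑ m, ((1 - w m) / 2) • P m
        = Finset.univ.centerMass (fun m => (1 - w m) / 2) P := by
      rw [Finset.centerMass_eq_of_sum_1 _ _ hsum2]
    rw [h2]
    exact Finset.centerMass_mem_convexHull _
      (fun m _ => by have := hwle m; linarith)
      (by rw [hsum2]; norm_num)
      (fun m _ => Set.mem_range_self m)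
  exact (hdisj.ne_of_mem hMseg hMhull) rfl
end

section
/- Let p, q, a, b : Fin 3 → ℤ (indices 1,2,3) satisfy p 1 + p 2 + p 3 = q 1 + q 2 + q 3 and a 1 + a 2 + a 3 = b 1 + b 2 + b 3. Assume N σ ≠ 0 for every permutation σ of {1,2,3}, and that for some i ≠ j the closed segment between Q i and Q j in ℝ² is disjoint from the convex hull of {P 1, P 2, P 3}. Then there exists a matrix A ∈ GL(2, ℤ) such that, writing (p′ i, a′ i) := A·(p i, a i) and (q′ i, b′ i) := A·(q i, b i), one has: (a) two of the integers p′ 1, p′ 2, p′ 3 coincide or two of the integers q′ 1, q′ 2, q′ 3 coincide, and (b) for every i, q′ i does not lie in the closed interval [min(p′ 1, p′ 2, p′ 3), max(p′ 1, p′ 2, p′ 3)]. (Paper: Theorem 3.7 — every positively curved Eschenburg 6-orbifold is equivalent to one fibering over a positively curved cohomogeneity-two Eschenburg 7-orbifold.) -/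
/-- The planar point associated to a pair of integer Eschenburg parameters,
e.g. `P i = (p i, a i)` and `Q i = (q i, b i)` in `ℝ²`. -/
noncomputable def eschPt (x y : ℤ) : EuclideanSpace ℝ (Fin 2) := WithLp.toLp 2 ![(x : ℝ), (y : ℝ)]

/-- The signed order `N σ` of the isotropy group at the vertex `∗_σ` of the Eschenburg
orbifold `O^{a,b}_{p,q}`. -/
def eschN (p q a b : Fin 3 → ℤ) (σ : Equiv.Perm (Fin 3)) : ℤ :=
  (p 0 - q (σ 0)) * (a 1 - b (σ 1)) - (p 1 - q (σ 1)) * (a 0 - b (σ 0))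

/-!
A positively curved parameter set comes with a line strictly separating the
segment `[Q i, Q j]` from the triangle `P₀P₁P₂`; by the separating axis theorem for
convex polygons this line may be taken parallel to an edge `PₘPₙ` or to `QᵢQⱼ`, and since
these points are integral, the separating functional may be taken to be a primitive
integral one `ℓ`. Completing `ℓ` to a matrix in `SL(2, ℤ)` gives `p′ = ℓ(P)`, `q′ = ℓ(Q)`:
two of them coincide because `ℓ` is constant along the edge, `q′ᵢ, q′ⱼ > max p′`, and the
third `q′ₖ = ∑ p′ - q′ᵢ - q′ⱼ < min p′`.

The separating axis theorem is proved on the six vectors `Pₘ - Qₜ`, which lie in an open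
half-plane: the two angularly extreme ones span a cone containing all of them, and a
parallelogram argument shows that one edge direction separates both extreme rays. The cone is
not degenerate because `N σ` is the wedge product of `P₀ - Q_{σ 0}` and `P₁ - Q_{σ 1}`.
-/

section Plane

variable {R : Type*} [CommRing R]

def wedge (z w : R × R) : R := z.1 * w.2 - z.2 * w.1

def dot (z w : R × R) : R := z.1 * w.1 + z.2 * w.2

lemma wedge_anticomm (z w : R × R) : wedge w z = -wedge z w := by
  simp only [wedge]; ring

@[simp]
lemma wedge_self (z : R × R) : wedge z z = 0 := by
  simp only [wedge]; ring

@[simp]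
lemma wedge_zero_left (w : R × R) : wedge 0 w = 0 := by
  simp [wedge]

lemma dot_sub_right (u z w : R × R) : dot u (z - w) = dot u z - dot u w := by
  simp only [dot, Prod.fst_sub, Prod.snd_sub]; ring

lemma dot_smul_left (g : R) (L z : R × R) : dot (g • L) z = g * dot L z := by
  simp only [dot, Prod.smul_fst, Prod.smul_snd, smul_eq_mul]; ring

lemma dot_rotate (w z : R × R) : dot (-w.2, w.1) z = wedge w z := by
  simp only [dot, wedge]; ring

lemma wedge_map {S : Type*} [CommRing S] (f : R →+* S) (z w : R × R) :
    wedge (f.prodMap f z) (f.prodMap f w) = f (wedge z w) := by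
  simp [wedge]

lemma wedge_smul_eq_add (v w z : R × R) : wedge v w • z = wedge z w • v + wedge v z • w := by
  ext <;> simp only [wedge, Prod.smul_fst, Prod.smul_snd, Prod.fst_add, Prod.snd_add,
    smul_eq_mul] <;> ring

lemma eq_zero_of_wedge_eq_zero [IsDomain R] {v w z : R × R} (hvw : wedge v w ≠ 0)
    (hzw : wedge z w = 0) (hvz : wedge v z = 0) : z = 0 := by
  have h := wedge_smul_eq_add v w z
  rw [hzw, hvz, zero_smul, zero_smul, add_zero] at h
  exact (smul_eq_zero.mp h).resolve_left hvw

end Plane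

section OrderedPlane

variable {𝕜 : Type*} [Field 𝕜] [LinearOrder 𝕜] [IsStrictOrderedRing 𝕜]

lemma sq_add_sq_pos_of_dot_pos {u z : 𝕜 × 𝕜} (h : 0 < dot u z) : 0 < u.1 ^ 2 + u.2 ^ 2 := by
  by_contra! h0
  have h1 : u.1 = 0 := by nlinarith [sq_nonneg u.1, sq_nonneg u.2]
  have h2 : u.2 = 0 := by nlinarith [sq_nonneg u.1, sq_nonneg u.2]
  simp [dot, h1, h2] at h

/-- The tangent of the oriented angle from `u` to `z`; on the open half-plane `0 < dot u z`
it orders vectors by angle. -/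
noncomputable def tanAngle (u z : 𝕜 × 𝕜) : 𝕜 := wedge u z / dot u z

lemma tanAngle_le_tanAngle_iff {u z z' : 𝕜 × 𝕜} (hz : 0 < dot u z) (hz' : 0 < dot u z') :
    tanAngle u z ≤ tanAngle u z' ↔ 0 ≤ wedge z z' := by
  have key : (u.1 ^ 2 + u.2 ^ 2) * wedge z z' =
      wedge u z' * dot u z - wedge u z * dot u z' := by
    simp only [wedge, dot]; ring
  rw [tanAngle, tanAngle, div_le_div_iff₀ hz hz', ← sub_nonneg, ← key,
    mul_nonneg_iff_of_pos_left (sq_add_sq_pos_of_dot_pos hz)]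

lemma tanAngle_lt_tanAngle_iff {u z z' : 𝕜 × 𝕜} (hz : 0 < dot u z) (hz' : 0 < dot u z') :
    tanAngle u z < tanAngle u z' ↔ 0 < wedge z z' := by
  rw [← not_le, tanAngle_le_tanAngle_iff hz' hz, wedge_anticomm, not_le, neg_neg_iff_pos]

lemma wedge_neg_of_mem_cone {v w x z : 𝕜 × 𝕜} (hvw : 0 < wedge v w) (hvz : 0 ≤ wedge v z)
    (hzw : 0 ≤ wedge z w) (hz : z ≠ 0) (hxv : wedge x v < 0) (hxw : wedge x w < 0) :
    wedge x z < 0 := by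
  have key : wedge v w * wedge x z = wedge z w * wedge x v + wedge v z * wedge x w := by
    simp only [wedge]; ring
  refine neg_of_mul_neg_right ?_ hvw.le
  rw [key]
  rcases hzw.lt_or_eq with hzw | hzw
  · nlinarith
  rcases hvz.lt_or_eq with hvz | hvz
  · nlinarith
  exact absurd (eq_zero_of_wedge_eq_zero hvw.ne' hzw.symm hvz.symm) hz

/-- `a - b'` and `a' - b` are the remaining vertices of the parallelogram with diagonal from
`a - b` to `a' - b'`. A side direction fails only when one of them lies on a boundary ray of the
cone; as their sum is `(a - b) + (a' - b')`, this cannot happen for both sides. -/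
lemma parallelogram_side_separates_diagonal {a a' b b' : 𝕜 × 𝕜}
    (hK : 0 < wedge (a - b) (a' - b')) (hx : a - b' ≠ 0) (hy : a' - b ≠ 0)
    (hxK : 0 ≤ wedge (a - b) (a - b') ∧ 0 ≤ wedge (a - b') (a' - b'))
    (hyK : 0 ≤ wedge (a - b) (a' - b) ∧ 0 ≤ wedge (a' - b) (a' - b')) :
    (wedge (a' - a) (a - b) < 0 ∧ wedge (a' - a) (a' - b') < 0) ∨
      (wedge (b - b') (a - b) < 0 ∧ wedge (b - b') (a' - b') < 0) := by
  obtain ⟨hx₁, hx₂⟩ := hxK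
  obtain ⟨hy₁, hy₂⟩ := hyK
  have e₁ : wedge (a' - a) (a - b) = -wedge (a - b) (a' - b) := by
    simp only [wedge, Prod.fst_sub, Prod.snd_sub]; ring
  have e₂ : wedge (a' - a) (a' - b') = -wedge (a - b') (a' - b') := by
    simp only [wedge, Prod.fst_sub, Prod.snd_sub]; ring
  have e₃ : wedge (b - b') (a - b) = -wedge (a - b) (a - b') := by
    simp only [wedge, Prod.fst_sub, Prod.snd_sub]; ring
  have e₄ : wedge (b - b') (a' - b') = -wedge (a' - b) (a' - b') := by
    simp only [wedge, Prod.fst_sub, Prod.snd_sub]; ring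
  have s₁ : wedge (a - b) (a - b') + wedge (a - b) (a' - b) = wedge (a - b) (a' - b') := by
    simp only [wedge, Prod.fst_sub, Prod.snd_sub]; ring
  have s₂ : wedge (a - b') (a' - b') + wedge (a' - b) (a' - b') = wedge (a - b) (a' - b') := by
    simp only [wedge, Prod.fst_sub, Prod.snd_sub]; ring
  rw [e₁, e₂, e₃, e₄, neg_neg_iff_pos, neg_neg_iff_pos, neg_neg_iff_pos, neg_neg_iff_pos]
  have hx₂' : wedge (a - b) (a - b') = 0 → 0 < wedge (a - b') (a' - b') := fun h =>
    hx₂.lt_of_ne fun h' => hx (eq_zero_of_wedge_eq_zero hK.ne' h'.symm h)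
  have hy₁' : wedge (a' - b) (a' - b') = 0 → 0 < wedge (a - b) (a' - b) := fun h =>
    hy₁.lt_of_ne fun h' => hy (eq_zero_of_wedge_eq_zero hK.ne' h h'.symm)
  rcases hx₁.lt_or_eq with hx₁ | hx₁
  · rcases hy₂.lt_or_eq with hy₂ | hy₂
    · exact Or.inr ⟨hx₁, hy₂⟩
    · exact Or.inl ⟨hy₁' hy₂.symm, by linarith⟩
  · exact Or.inl ⟨by linarith, hx₂' hx₁.symm⟩

/-- The separating axis theorem for the polygons spanned by `A` and `B`, phrased on their
differences. -/
theorem exists_edge_wedge_neg {ι κ : Type*} [Finite ι] [Finite κ] (A : ι → 𝕜 × 𝕜)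
    (B : κ → 𝕜 × 𝕜) (u : 𝕜 × 𝕜) (hu : ∀ m t, 0 < dot u (A m - B t))
    (hspan : ∃ m t m' t', wedge (A m - B t) (A m' - B t') ≠ 0) :
    (∃ m n, ∀ m' t', wedge (A n - A m) (A m' - B t') < 0) ∨
      ∃ s t, ∀ m' t', wedge (B s - B t) (A m' - B t') < 0 := by
  obtain ⟨m₀, t₀, m₁, t₁, hspan⟩ := hspan
  have : Nonempty (ι × κ) := ⟨(m₀, t₀)⟩
  let d : ι × κ → 𝕜 × 𝕜 := fun r => A r.1 - B r.2
  have hd : ∀ r, 0 < dot u (d r) := fun r => hu r.1 r.2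
  obtain ⟨lo, hlo⟩ := Finite.exists_min fun r => tanAngle u (d r)
  obtain ⟨hi, hhi⟩ := Finite.exists_max fun r => tanAngle u (d r)
  have hne : tanAngle u (d (m₀, t₀)) ≠ tanAngle u (d (m₁, t₁)) := by
    intro h
    have h₁ := (tanAngle_le_tanAngle_iff (hd _) (hd _)).1 h.le
    have h₂ := (tanAngle_le_tanAngle_iff (hd _) (hd _)).1 h.ge
    rw [wedge_anticomm] at h₂
    exact hspan (by linarith)
  have hK : 0 < wedge (d lo) (d hi) := by
    rw [← tanAngle_lt_tanAngle_iff (hd lo) (hd hi)]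
    rcases hne.lt_or_gt with h | h <;> exact (hlo _).trans_lt (h.trans_le (hhi _))
  have hcone : ∀ r, 0 ≤ wedge (d lo) (d r) ∧ 0 ≤ wedge (d r) (d hi) := fun r =>
    ⟨(tanAngle_le_tanAngle_iff (hd lo) (hd r)).1 (hlo r),
      (tanAngle_le_tanAngle_iff (hd r) (hd hi)).1 (hhi r)⟩
  have hne0 : ∀ r, d r ≠ 0 := fun r h => by simpa [h, dot] using hd r
  have hsep : ∀ w, wedge w (d lo) < 0 → wedge w (d hi) < 0 → ∀ m t, wedge w (A m - B t) < 0 :=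
    fun w h₁ h₂ m t =>
      wedge_neg_of_mem_cone hK (hcone (m, t)).1 (hcone (m, t)).2 (hne0 (m, t)) h₁ h₂
  rcases parallelogram_side_separates_diagonal hK (hne0 (lo.1, hi.2)) (hne0 (hi.1, lo.2))
      (hcone (lo.1, hi.2)) (hcone (hi.1, lo.2)) with ⟨h₁, h₂⟩ | ⟨h₁, h₂⟩
  · exact Or.inl ⟨lo.1, hi.1, hsep _ h₁ h₂⟩
  · exact Or.inr ⟨lo.2, hi.2, hsep _ h₁ h₂⟩

end OrderedPlane

abbrev intPairCast : ℤ × ℤ →+* ℝ × ℝ := (Int.castRingHom ℝ).prodMap (Int.castRingHom ℝ)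

section IntegralSeparation

variable {ι κ : Type*}

def SeparatesAlongEdge (P : ι → ℤ × ℤ) (Q : κ → ℤ × ℤ) (L : ℤ × ℤ) : Prop :=
  (∀ m t, dot L (P m) < dot L (Q t)) ∧
    ((∃ m n, m ≠ n ∧ dot L (P m) = dot L (P n)) ∨ ∃ s t, s ≠ t ∧ dot L (Q s) = dot L (Q t))

variable {P : ι → ℤ × ℤ} {Q : κ → ℤ × ℤ} {L : ℤ × ℤ}

lemma SeparatesAlongEdge.of_smul {g : ℤ} (hg : 0 < g) (h : SeparatesAlongEdge P Q (g • L)) :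
    SeparatesAlongEdge P Q L := by
  simpa only [SeparatesAlongEdge, dot_smul_left, mul_lt_mul_iff_right₀ hg,
    mul_right_inj' hg.ne'] using h

lemma SeparatesAlongEdge.ne_zero [Nonempty ι] [Nonempty κ] (h : SeparatesAlongEdge P Q L) :
    L ≠ 0 := by
  rintro rfl
  obtain ⟨m⟩ := ‹Nonempty ι›
  obtain ⟨t⟩ := ‹Nonempty κ›
  simpa [dot] using h.1 m t

lemma exists_pos_smul_det_eq_one {L : ℤ × ℤ} (hL : L ≠ 0) :
    ∃ g : ℤ, 0 < g ∧ ∃ A : Matrix (Fin 2) (Fin 2) ℤ, A.det = 1 ∧ L = g • (A 0 0, A 0 1) := by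
  obtain ⟨U, V⟩ := L
  have hgcd : 0 < Int.gcd U V := Int.gcd_pos_iff.mpr (by contrapose! hL; simp [hL])
  obtain ⟨g, U, V, hg, hUV, rfl, rfl⟩ := Int.exists_gcd_one' hgcd
  obtain ⟨x, y, hxy⟩ := Int.isCoprime_iff_gcd_eq_one.mpr hUV
  refine ⟨g, by exact_mod_cast hg, !![U, V; -y, x], ?_, ?_⟩
  · rw [Matrix.det_fin_two_of]
    linear_combination hxy
  · simp [mul_comm]

lemma SeparatesAlongEdge.exists_det_eq_one [Nonempty ι] [Nonempty κ]
    (h : SeparatesAlongEdge P Q L) :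
    ∃ A : Matrix (Fin 2) (Fin 2) ℤ, A.det = 1 ∧ SeparatesAlongEdge P Q (A 0 0, A 0 1) := by
  obtain ⟨g, hg, A, hA, rfl⟩ := exists_pos_smul_det_eq_one h.ne_zero
  exact ⟨A, hA, h.of_smul hg⟩

theorem exists_separatesAlongEdge [Finite ι] [Finite κ] (u : ℝ × ℝ)
    (hu : ∀ m t, dot u (intPairCast (Q t)) < dot u (intPairCast (P m)))
    (hspan : ∃ m t m' t', wedge (P m - Q t) (P m' - Q t') ≠ 0) :
    ∃ L, SeparatesAlongEdge P Q L := by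
  have hcast : ∀ z w : ℤ × ℤ, wedge (intPairCast z) (intPairCast w) < 0 ↔ wedge z w < 0 :=
    fun z w => by rw [wedge_map]; exact Int.cast_lt_zero
  have hsep : ∀ w : ℤ × ℤ, (∀ m t, wedge w (P m - Q t) < 0) →
      ∀ m t, dot (-w.2, w.1) (P m) < dot (-w.2, w.1) (Q t) := fun w hw m t => by
    rw [← sub_neg, ← dot_sub_right, dot_rotate]
    exact hw m t
  have hedge : ∀ z z' : ℤ × ℤ,
      dot (-(z - z').2, (z - z').1) z = dot (-(z - z').2, (z - z').1) z' := fun z z' => by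
    rw [← sub_eq_zero, ← dot_sub_right, dot_rotate, wedge_self]
  rcases exists_edge_wedge_neg (fun m => intPairCast (P m)) (fun t => intPairCast (Q t)) u
      (fun m t => by rw [dot_sub_right, sub_pos]; exact hu m t)
      (by
        obtain ⟨m, t, m', t', h⟩ := hspan
        refine ⟨m, t, m', t', ?_⟩
        rw [← map_sub, ← map_sub, wedge_map]
        exact Int.cast_ne_zero.mpr h)
    with ⟨m, n, h⟩ | ⟨s, t, h⟩ <;>
    simp only [← map_sub, hcast] at h <;>
    obtain ⟨m₀, t₀, -⟩ := hspan
  · refine ⟨_, hsep _ h, Or.inl ⟨n, m, ?_, hedge _ _⟩⟩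
    rintro rfl
    simpa using h m₀ t₀
  · refine ⟨_, hsep _ h, Or.inr ⟨s, t, ?_, hedge _ _⟩⟩
    rintro rfl
    simpa using h m₀ t₀

end IntegralSeparation

lemma exists_dual_lt_of_disjoint_convexHull {E ι κ : Type*} [NormedAddCommGroup E]
    [NormedSpace ℝ E] [Finite ι] [Finite κ] (x : ι → E) (y : κ → E)
    (h : Disjoint (convexHull ℝ (Set.range y)) (convexHull ℝ (Set.range x))) :
    ∃ f : StrongDual ℝ E, ∀ m t, f (y t) < f (x m) := by
  obtain ⟨f, c, c', hy, hc, hx⟩ := geometric_hahn_banach_compact_closed (convex_convexHull ℝ _)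
    ((Set.finite_range y).isCompact_convexHull ℝ) (convex_convexHull ℝ _)
    ((Set.finite_range x).isCompact_convexHull ℝ).isClosed h
  exact ⟨f, fun m t => (hy _ (subset_convexHull ℝ _ ⟨t, rfl⟩)).trans
    (hc.trans (hx _ (subset_convexHull ℝ _ ⟨m, rfl⟩)))⟩

lemma map_eschPt {F : Type*} [FunLike F (EuclideanSpace ℝ (Fin 2)) ℝ]
    [LinearMapClass F ℝ (EuclideanSpace ℝ (Fin 2)) ℝ] (f : F) (z : ℤ × ℤ) :
    f (eschPt z.1 z.2) = dot (f (eschPt 1 0), f (eschPt 0 1)) (intPairCast z) := by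
  have h : eschPt z.1 z.2 = (z.1 : ℝ) • eschPt 1 0 + (z.2 : ℝ) • eschPt 0 1 := by
    ext k
    fin_cases k <;> simp [eschPt]
  rw [h, map_add, map_smul, map_smul, smul_eq_mul, smul_eq_mul, dot]
  simp [mul_comm]

lemma exists_dot_lt_of_disjoint_convexHull_eschPt {ι κ : Type*} [Finite ι] [Finite κ]
    (P : ι → ℤ × ℤ) (Q : κ → ℤ × ℤ)
    (h : Disjoint (convexHull ℝ (Set.range fun t => eschPt (Q t).1 (Q t).2))
      (convexHull ℝ (Set.range fun m => eschPt (P m).1 (P m).2))) :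
    ∃ u : ℝ × ℝ, ∀ m t, dot u (intPairCast (Q t)) < dot u (intPairCast (P m)) := by
  obtain ⟨f, hf⟩ := exists_dual_lt_of_disjoint_convexHull _ _ h
  refine ⟨(f (eschPt 1 0), f (eschPt 0 1)), fun m t => ?_⟩
  simpa only [map_eschPt f] using hf m t

lemma exists_perm_apply_zero_apply_one :
    ∀ {i j : Fin 3}, i ≠ j → ∃ σ : Equiv.Perm (Fin 3), σ 0 = i ∧ σ 1 = j := by
  decide

lemma notMem_Icc_min_max_of_sum_eq {x y : Fin 3 → ℤ} {i j : Fin 3} (hij : i ≠ j)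
    (hsum : y 0 + y 1 + y 2 = x 0 + x 1 + x 2) (hi : ∀ m, x m < y i) (hj : ∀ m, x m < y j)
    (k : Fin 3) : y k ∉ Set.Icc (min (x 0) (min (x 1) (x 2))) (max (x 0) (max (x 1) (x 2))) := by
  have := hi 0; have := hi 1; have := hi 2
  have := hj 0; have := hj 1; have := hj 2
  rw [Set.mem_Icc]
  fin_cases i <;> fin_cases j <;> fin_cases k <;>
    simp only [Fin.reduceFinMk, Fin.isValue, ne_eq, not_true_eq_false] at * <;> omega

/-- **(Theorem 3.7.)** Every positively curved Eschenburg `6`-orbifold is equivalent, via a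
`GL(2, ℤ)` change of parameters, to one fibering over a positively curved
cohomogeneity-two Eschenburg `7`-orbifold: two of the new `p′`-entries or two of the new
`q′`-entries coincide, and no `q′ i` lies in `[min p′, max p′]`. -/
theorem positively_curved_fibers_over_cohomogeneity_two
    (p q a b : Fin 3 → ℤ)
    (hpq : p 0 + p 1 + p 2 = q 0 + q 1 + q 2)
    (hab : a 0 + a 1 + a 2 = b 0 + b 1 + b 2)
    (hfree : ∀ σ : Equiv.Perm (Fin 3), eschN p q a b σ ≠ 0)
    (hpos : ∃ i j : Fin 3, i ≠ j ∧
      Disjoint (segment ℝ (eschPt (q i) (b i)) (eschPt (q j) (b j)))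
        (convexHull ℝ (Set.range fun i => eschPt (p i) (a i)))) :
    ∃ A : Matrix (Fin 2) (Fin 2) ℤ, IsUnit A.det ∧
      (let p' : Fin 3 → ℤ := fun i => A 0 0 * p i + A 0 1 * a i
       let a' : Fin 3 → ℤ := fun i => A 1 0 * p i + A 1 1 * a i
       let q' : Fin 3 → ℤ := fun i => A 0 0 * q i + A 0 1 * b i
       let b' : Fin 3 → ℤ := fun i => A 1 0 * q i + A 1 1 * b i
       ((∃ i j : Fin 3, i ≠ j ∧ p' i = p' j) ∨ (∃ i j : Fin 3, i ≠ j ∧ q' i = q' j)) ∧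
         ∀ i : Fin 3, q' i ∉
           Set.Icc (min (p' 0) (min (p' 1) (p' 2))) (max (p' 0) (max (p' 1) (p' 2)))) := by
  obtain ⟨i, j, hij, hd⟩ := hpos
  obtain ⟨σ, hσ₀, hσ₁⟩ := exists_perm_apply_zero_apply_one hij
  let P : Fin 3 → ℤ × ℤ := fun m => (p m, a m)
  let Q : Fin 2 → ℤ × ℤ := fun t => (q (![i, j] t), b (![i, j] t))
  have hQ : Set.range (fun t => eschPt (Q t).1 (Q t).2) =
      {eschPt (q i) (b i), eschPt (q j) (b j)} := by
    ext z
    simp [Q, Fin.exists_fin_two, eq_comm]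
  obtain ⟨u, hu⟩ := exists_dot_lt_of_disjoint_convexHull_eschPt P Q (by rwa [hQ, convexHull_pair])
  have hspan : wedge (P 0 - Q 0) (P 1 - Q 1) ≠ 0 := by
    have : wedge (P 0 - Q 0) (P 1 - Q 1) = eschN p q a b σ := by
      simp [wedge, eschN, hσ₀, hσ₁, P, Q]
      ring
    exact this ▸ hfree σ
  obtain ⟨L, hL⟩ := exists_separatesAlongEdge u hu ⟨0, 0, 1, 1, hspan⟩
  obtain ⟨A, hA, hlt, hedge⟩ := hL.exists_det_eq_one
  refine ⟨A, hA ▸ isUnit_one, ?_⟩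
  intro p' _ q' _
  refine ⟨?_, notMem_Icc_min_max_of_sum_eq hij ?_ (fun m => hlt m 0) (fun m => hlt m 1)⟩
  · rcases hedge with ⟨m, n, hmn, h⟩ | ⟨s, t, hst, h⟩
    · exact Or.inl ⟨m, n, hmn, h⟩
    · exact Or.inr ⟨_, _, (injective_pair_iff_ne.mpr hij).ne hst, h⟩
  · simp only [p', q']
    linear_combination A 0 0 * hpq.symm + A 0 1 * hab.symm
end

section
/- Proposition 4.1 in arithmetic form: let p, q, a, b : Fin 3 → ℤ satisfy p 1 + p 2 + p 3 = q 1 + q 2 + q 3 and a 1 + a 2 + a 3 = b 1 + b 2 + b 3. Assume: (i) two of the entries of p coincide or two of the entries of q coincide (the Eschenburg 7-orbifold E⁷_{p,q} has cohomogeneity two); (ii) N σ ≠ 0 for every permutation σ of {1,2,3} (the circle action on E⁷_{p,q} is almost free); (iii) either |N σ| = 1 for all three even permutations σ, or |N σ| = 1 for all three odd permutations σ (three vertices of the same parity are regular); (iv) either no q i lies in the closed interval [min(p 1, p 2, p 3), max(p 1, p 2, p 3)], or no p i lies in the closed interval [min(q 1, q 2, q 3), max(q 1, q 2, q 3)] (E⁷_{p,q}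 or E⁷_{q,p} admits positive curvature). Then |N σ| = 1 for every permutation σ of {1,2,3}; that is, the 2-torus acts freely on SU(3) and the quotient is a smooth manifold. -/
open Equiv Finset

section Arithmetic

variable {e0 e1 e2 β η0 η1 η2 : ℤ}

lemma abs_mul_abs_le_of_sum_mul_eq_zero (hη0 : |η0| = 1) (hη1 : |η1| = 1) (hη2 : |η2| = 1)
    (hm : e0 * (2 * η0 + (e1 + e2) * β) + e1 * (2 * η1 + (e0 + e2) * β)
      + e2 * (2 * η2 + (e0 + e1) * β) = 0) :
    |β| * |e0 * e1 + e1 * e2 + e2 * e0| ≤ |e0| + |e1| + |e2| := by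
  have hβ : β * (e0 * e1 + e1 * e2 + e2 * e0) = -(e0 * η0 + e1 * η1 + e2 * η2) :=
    mul_left_cancel₀ two_ne_zero (by linear_combination hm)
  calc |β| * |e0 * e1 + e1 * e2 + e2 * e0| = |e0 * η0 + e1 * η1 + e2 * η2| := by
        rw [← abs_mul, hβ, abs_neg]
    _ ≤ |e0 * η0| + |e1 * η1| + |e2 * η2| := abs_add_three _ _ _
    _ = |e0| + |e1| + |e2| := by simp only [abs_mul, hη0, hη1, hη2, mul_one]

lemma two_mul_add_eq_zero_of_pos (he0 : 0 < e0) (he1 : 0 < e1) (he2 : 0 < e2) (hβ : β ≠ 0)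
    (hη0 : |η0| = 1) (hη1 : |η1| = 1) (hη2 : |η2| = 1)
    (hm : e0 * (2 * η0 + (e1 + e2) * β) + e1 * (2 * η1 + (e0 + e2) * β)
      + e2 * (2 * η2 + (e0 + e1) * β) = 0) :
    2 * η0 + (e1 + e2) * β = 0 ∧ 2 * η1 + (e0 + e2) * β = 0 ∧ 2 * η2 + (e0 + e1) * β = 0 := by
  have hle := abs_mul_abs_le_of_sum_mul_eq_zero hη0 hη1 hη2 hm
  rw [abs_of_pos (by positivity : 0 < e0 * e1 + e1 * e2 + e2 * e0), abs_of_pos he0,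
    abs_of_pos he1, abs_of_pos he2] at hle
  have hβ1 : 1 ≤ |β| := Int.one_le_abs hβ
  obtain ⟨rfl, rfl, rfl⟩ : e0 = 1 ∧ e1 = 1 ∧ e2 = 1 := by
    refine ⟨?_, ?_, ?_⟩ <;>
      nlinarith [mul_nonneg (by omega : (0 : ℤ) ≤ e0 - 1) (by omega : (0 : ℤ) ≤ e1 - 1),
        mul_nonneg (by omega : (0 : ℤ) ≤ e1 - 1) (by omega : (0 : ℤ) ≤ e2 - 1),
        mul_nonneg (by omega : (0 : ℤ) ≤ e2 - 1) (by omega : (0 : ℤ) ≤ e0 - 1)]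
  rw [abs_eq zero_le_one] at hη0 hη1 hη2
  have : β = 1 ∨ β = -1 := by rw [← abs_eq zero_le_one]; omega
  omega

lemma two_mul_add_eq_zero_of_mixed (he0 : 0 < e0) (he1 : 0 < e1) (he02 : e0 + e2 < 0)
    (he12 : e1 + e2 < 0) (hβ : β ≠ 0) (hη0 : |η0| = 1) (hη1 : |η1| = 1) (hη2 : |η2| = 1)
    (hm : e0 * (2 * η0 + (e1 + e2) * β) + e1 * (2 * η1 + (e0 + e2) * β)
      + e2 * (2 * η2 + (e0 + e1) * β) = 0) :
    2 * η0 + (e1 + e2) * β = 0 ∧ 2 * η1 + (e0 + e2) * β = 0 ∧ 2 * η2 + (e0 + e1) * β = 0 := by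
  have hle := abs_mul_abs_le_of_sum_mul_eq_zero hη0 hη1 hη2 hm
  rw [abs_of_neg (by nlinarith : e0 * e1 + e1 * e2 + e2 * e0 < 0), abs_of_pos he0,
    abs_of_pos he1, abs_of_neg (by omega : e2 < 0)] at hle
  have hβ1 : 1 ≤ |β| := Int.one_le_abs hβ
  have h2S : e0 + e1 - e2 < 2 * -(e0 * e1 + e1 * e2 + e2 * e0) := by nlinarith
  have hβ : |β| = 1 := by nlinarith
  rw [hβ, one_mul] at hle
  obtain ⟨rfl, rfl⟩ : e0 = 1 ∧ e1 = 1 := by constructor <;> nlinarith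
  obtain rfl | rfl : e2 = -2 ∨ e2 = -3 := by omega
  all_goals
    rw [abs_eq zero_le_one] at hη0 hη1 hη2 hβ
    omega

lemma two_mul_add_eq_zero
    (hsign : (0 < e0 * (e1 + e2) ∧ 0 < e1 * (e0 + e2) ∧ 0 < e2 * (e0 + e1)) ∨
      (e0 * (e1 + e2) < 0 ∧ e1 * (e0 + e2) < 0 ∧ e2 * (e0 + e1) < 0))
    (hβ : β ≠ 0) (hη0 : |η0| = 1) (hη1 : |η1| = 1) (hη2 : |η2| = 1)
    (hm : e0 * (2 * η0 + (e1 + e2) * β) + e1 * (2 * η1 + (e0 + e2) * β)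
      + e2 * (2 * η2 + (e0 + e1) * β) = 0) :
    2 * η0 + (e1 + e2) * β = 0 ∧ 2 * η1 + (e0 + e2) * β = 0 ∧ 2 * η2 + (e0 + e1) * β = 0 := by
  have hne : e0 ≠ 0 ∧ e1 ≠ 0 ∧ e2 ≠ 0 := by
    refine ⟨?_, ?_, ?_⟩ <;> rintro rfl <;> simp at hsign
  wlog he0 : 0 < e0 generalizing e0 e1 e2 β
  · have h := this (e0 := -e0) (e1 := -e1) (e2 := -e2) (β := -β)
      (by simpa only [← neg_add, neg_mul_neg] using hsign) (neg_ne_zero.2 hβ)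
      (by linear_combination -hm) (by simpa using hne) (by omega)
    simpa only [← neg_add, neg_mul_neg] using h
  rcases lt_or_gt_of_ne hne.2.1 with he1 | he1 <;> rcases lt_or_gt_of_ne hne.2.2 with he2 | he2
  · obtain ⟨h1, h2, h0⟩ := two_mul_add_eq_zero_of_mixed (e0 := -e1) (e1 := -e2) (e2 := -e0)
      (β := -β) (by omega) (by omega) (by rcases hsign with h | h <;> nlinarith)
      (by rcases hsign with h | h <;> nlinarith) (neg_ne_zero.2 hβ) hη1 hη2 hη0
      (by linear_combination -hm)
    exact ⟨by linear_combination h0, by linear_combination h1, by linear_combination h2⟩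
  · obtain ⟨h0, h2, h1⟩ := two_mul_add_eq_zero_of_mixed (e0 := e0) (e1 := e2) (e2 := e1)
      he0 he2 (by rcases hsign with h | h <;> nlinarith) (by rcases hsign with h | h <;> nlinarith)
      hβ hη0 hη2 hη1 (by linear_combination hm)
    exact ⟨by linear_combination h0, by linear_combination h1, by linear_combination h2⟩
  · exact two_mul_add_eq_zero_of_mixed he0 he1 (by rcases hsign with h | h <;> nlinarith)
      (by rcases hsign with h | h <;> nlinarith) hβ hη0 hη1 hη2 hm
  · exact two_mul_add_eq_zero_of_pos he0 he1 he2 hβ hη0 hη1 hη2 hm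

lemma abs_eq_abs_of_sum_mul_add_eq_zero {ζ0 ζ1 ζ2 : ℤ}
    (hsign : (0 < e0 * (e1 + e2) ∧ 0 < e1 * (e0 + e2) ∧ 0 < e2 * (e0 + e1)) ∨
      (e0 * (e1 + e2) < 0 ∧ e1 * (e0 + e2) < 0 ∧ e2 * (e0 + e1) < 0))
    (hreg : (|η0| = 1 ∧ |η1| = 1 ∧ |η2| = 1) ∨ (|ζ0| = 1 ∧ |ζ1| = 1 ∧ |ζ2| = 1))
    (hζ0 : ζ0 = η0 + (e1 + e2) * β) (hζ1 : ζ1 = η1 + (e0 + e2) * β)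
    (hζ2 : ζ2 = η2 + (e0 + e1) * β)
    (hm : e0 * (η0 + ζ0) + e1 * (η1 + ζ1) + e2 * (η2 + ζ2) = 0) :
    |ζ0| = |η0| ∧ |ζ1| = |η1| ∧ |ζ2| = |η2| := by
  rcases eq_or_ne β 0 with rfl | hβ
  · simp [hζ0, hζ1, hζ2]
  subst hζ0 hζ1 hζ2
  obtain ⟨h0, h1, h2⟩ : 2 * η0 + (e1 + e2) * β = 0 ∧ 2 * η1 + (e0 + e2) * β = 0 ∧
      2 * η2 + (e0 + e1) * β = 0 := by
    rcases hreg with ⟨hη0, hη1, hη2⟩ | ⟨hζ0, hζ1, hζ2⟩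
    · exact two_mul_add_eq_zero hsign hβ hη0 hη1 hη2 (by linear_combination hm)
    · obtain ⟨h0, h1, h2⟩ := two_mul_add_eq_zero (β := -β) hsign (neg_ne_zero.2 hβ) hζ0 hζ1 hζ2
        (by linear_combination hm)
      exact ⟨by linear_combination h0, by linear_combination h1, by linear_combination h2⟩
  exact ⟨abs_eq_abs.2 (Or.inr (by linear_combination h0)),
    abs_eq_abs.2 (Or.inr (by linear_combination h1)),
    abs_eq_abs.2 (Or.inr (by linear_combination h2))⟩

end Arithmetic

lemma perm_fin_three_cases (π : Perm (Fin 3)) :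
    π = 1 ∨ π = swap 0 1 ∨ π = swap 0 2 ∨ π = swap 1 2 ∨
      π = swap 0 1 * swap 0 2 ∨ π = swap 0 1 * swap 1 2 := by
  revert π; decide

lemma exists_perm_apply_zero_apply_one_s7 {i j : Fin 3} (hij : i ≠ j) :
    ∃ π : Perm (Fin 3), π 0 = i ∧ π 1 = j := by
  revert i j; decide

lemma Equiv.Perm.sign_inv_mul_mul {α : Type*} [DecidableEq α] [Fintype α] (π σ : Perm α) :
    Perm.sign (π⁻¹ * σ * π) = Perm.sign σ := by
  rw [Perm.sign_mul, Perm.sign_mul, Perm.sign_inv, mul_right_comm, Int.units_mul_self, one_mul]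

lemma Int.abs_units (u : ℤˣ) : |(u : ℤ)| = 1 := Int.isUnit_iff_abs_eq.mp u.isUnit

def minor01 (u v : Fin 3 → ℤ) : ℤ := u 0 * v 1 - u 1 * v 0

lemma minor01_neg (u v : Fin 3 → ℤ) : minor01 (-u) (-v) = minor01 u v := by
  simp [minor01]

-- For zero-sum `u` and `v` the cross product `u × v` is `minor01 u v • (1, 1, 1)`.
lemma minor01_comp_perm {u v : Fin 3 → ℤ} (hu : ∑ i, u i = 0) (hv : ∑ i, v i = 0)
    (π : Perm (Fin 3)) : minor01 (u ∘ π) (v ∘ π) = Perm.sign π * minor01 u v := by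
  rw [Fin.sum_univ_three] at hu hv
  have hu2 : u 2 = -u 0 - u 1 := by linarith
  have hv2 : v 2 = -v 0 - v 1 := by linarith
  rcases perm_fin_three_cases π with rfl | rfl | rfl | rfl | rfl | rfl <;>
    simp only [minor01, Function.comp_apply, Perm.coe_one, id_eq, Perm.coe_mul, swap_apply_left,
      swap_apply_right, swap_apply_of_ne_of_ne, ne_eq, Fin.reduceEq, not_false_eq_true,
      Perm.sign_one, Perm.sign_mul, Perm.sign_swap', ↓reduceIte, Units.val_neg, Units.val_one,
      mul_neg, mul_one, neg_neg, hu2, hv2] <;>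
    ring

section Eschenburg

variable {p q a b : Fin 3 → ℤ}

lemma eschN_eq_minor01 (σ : Perm (Fin 3)) :
    eschN p q a b σ = minor01 (p - q ∘ σ) (a - b ∘ σ) := rfl

lemma sum_sub_comp_perm_eq_zero (hpq : ∑ i, p i = ∑ i, q i) (σ : Perm (Fin 3)) :
    ∑ i, (p - q ∘ σ) i = 0 := by
  simp [sum_sub_distrib, Equiv.sum_comp σ q, hpq]

lemma eschN_comp_perm (hpq : ∑ i, p i = ∑ i, q i) (hab : ∑ i, a i = ∑ i, b i)
    (π σ : Perm (Fin 3)) :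
    eschN (p ∘ π) (q ∘ π) (a ∘ π) (b ∘ π) (π⁻¹ * σ * π) = Perm.sign π * eschN p q a b σ := by
  rw [eschN_eq_minor01, eschN_eq_minor01, ← minor01_comp_perm (sum_sub_comp_perm_eq_zero hpq σ)
    (sum_sub_comp_perm_eq_zero hab σ)]
  congr 1 <;> ext i <;> simp

lemma eschN_swap_sides (hpq : ∑ i, p i = ∑ i, q i) (hab : ∑ i, a i = ∑ i, b i)
    (σ : Perm (Fin 3)) : eschN q p b a σ⁻¹ = Perm.sign σ * eschN p q a b σ := by
  rw [eschN_eq_minor01, eschN_eq_minor01, ← Perm.sign_inv, ← minor01_comp_perm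
    (sum_sub_comp_perm_eq_zero hpq σ) (sum_sub_comp_perm_eq_zero hab σ), ← minor01_neg]
  congr 1 <;> ext i <;> simp

def RegularVertices (p q a b : Fin 3 → ℤ) (s : ℤˣ) : Prop :=
  ∀ σ : Perm (Fin 3), Perm.sign σ = s → |eschN p q a b σ| = 1

lemma regularVertices_comp_perm_iff (hpq : ∑ i, p i = ∑ i, q i) (hab : ∑ i, a i = ∑ i, b i)
    (π : Perm (Fin 3)) {s : ℤˣ} :
    RegularVertices (p ∘ π) (q ∘ π) (a ∘ π) (b ∘ π) s ↔ RegularVertices p q a b s := by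
  constructor
  · intro h σ hσ
    have := h (π⁻¹ * σ * π) (by rwa [Perm.sign_inv_mul_mul])
    rwa [eschN_comp_perm hpq hab, abs_mul, Int.abs_units, one_mul] at this
  · intro h σ hσ
    rw [show σ = π⁻¹ * (π * σ * π⁻¹) * π by group, eschN_comp_perm hpq hab, abs_mul,
      Int.abs_units, one_mul]
    exact h _ (by simpa [hσ] using Perm.sign_inv_mul_mul π⁻¹ σ)

lemma RegularVertices.swap (hpq : ∑ i, p i = ∑ i, q i) (hab : ∑ i, a i = ∑ i, b i) {s : ℤˣ}
    (h : RegularVertices p q a b s) : RegularVertices q p b a s := by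
  intro σ hσ
  rw [← inv_inv σ, eschN_swap_sides hpq hab, abs_mul, Int.abs_units, one_mul]
  exact h _ (by simpa using hσ)

def AvoidsHull (q p : Fin 3 → ℤ) : Prop :=
  ∀ i, (∀ m, q i < p m) ∨ ∀ m, p m < q i

lemma avoidsHull_of_forall_not_mem_Icc
    (h : ∀ i, q i ∉ Set.Icc (min (p 0) (min (p 1) (p 2))) (max (p 0) (max (p 1) (p 2)))) :
    AvoidsHull q p := by
  intro i
  have hi := h i
  simp only [Set.mem_Icc, not_and_or, not_le, lt_min_iff, max_lt_iff] at hi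
  refine hi.imp (fun h m => ?_) (fun h m => ?_) <;> fin_cases m <;> simp [h]

lemma AvoidsHull.comp_perm (h : AvoidsHull q p) (π : Perm (Fin 3)) :
    AvoidsHull (q ∘ π) (p ∘ π) := fun i =>
  (h (π i)).imp (fun h m => h (π m)) (fun h m => h (π m))

lemma mul_sub_pos_or_mul_sub_neg (h : AvoidsHull q p ∨ AvoidsHull p q) (i k : Fin 3) :
    (∀ m, 0 < (q i - p m) * (q k - p m)) ∨ ∀ m, (q i - p m) * (q k - p m) < 0 := by
  rcases h with h | h
  · rcases h i with hi | hi <;> rcases h k with hk | hk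
    · exact Or.inl fun m => by nlinarith [hi m, hk m]
    · exact Or.inr fun m => by nlinarith [hi m, hk m]
    · exact Or.inr fun m => by nlinarith [hi m, hk m]
    · exact Or.inl fun m => by nlinarith [hi m, hk m]
  · exact Or.inl fun m => by rcases h m with hm | hm <;> nlinarith [hm i, hm k]

theorem regularVertices_neg_of_eq (hpq : ∑ i, p i = ∑ i, q i) (hab : ∑ i, a i = ∑ i, b i)
    (hq : q 0 = q 1) (hcurv : AvoidsHull q p ∨ AvoidsHull p q) {s : ℤˣ}
    (h : RegularVertices p q a b s) : RegularVertices p q a b (-s) := by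
  rw [Fin.sum_univ_three, Fin.sum_univ_three] at hpq hab
  have hq2 : q 2 = p 0 + p 1 + p 2 - 2 * q 0 := by linarith
  have hb2 : b 2 = a 0 + a 1 + a 2 - b 0 - b 1 := by linarith
  have hreg : (|eschN p q a b (swap 0 1 * swap 0 2)| = 1 ∧
      |eschN p q a b (swap 0 1 * swap 1 2)| = 1 ∧ |eschN p q a b (swap 0 1 * swap 0 1)| = 1) ∨
      (|eschN p q a b (swap 0 2)| = 1 ∧ |eschN p q a b (swap 1 2)| = 1 ∧
      |eschN p q a b (swap 0 1)| = 1) := by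
    rcases Int.units_eq_one_or s with rfl | rfl
    · exact Or.inl ⟨h _ (by decide), h _ (by decide), h _ (by decide)⟩
    · exact Or.inr ⟨h _ (by decide), h _ (by decide), h _ (by decide)⟩
  obtain ⟨h0, h1, h2⟩ : |eschN p q a b (swap 0 2)| = |eschN p q a b (swap 0 1 * swap 0 2)| ∧
      |eschN p q a b (swap 1 2)| = |eschN p q a b (swap 0 1 * swap 1 2)| ∧
      |eschN p q a b (swap 0 1)| = |eschN p q a b (swap 0 1 * swap 0 1)| := by
    refine abs_eq_abs_of_sum_mul_add_eq_zero (e0 := q 0 - p 0) (e1 := q 0 - p 1)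
      (e2 := q 0 - p 2) (β := b 0 - b 1) ?_ hreg ?_ ?_ ?_ ?_
    · rcases mul_sub_pos_or_mul_sub_neg hcurv 0 2 with h | h <;> rw [hq2] at h
      · exact Or.inr ⟨by nlinarith [h 0], by nlinarith [h 1], by nlinarith [h 2]⟩
      · exact Or.inl ⟨by nlinarith [h 0], by nlinarith [h 1], by nlinarith [h 2]⟩
    all_goals
      simp only [eschN, Perm.coe_mul, Function.comp_apply, swap_apply_left, swap_apply_right,
        swap_apply_of_ne_of_ne, ne_eq, Fin.reduceEq, not_false_eq_true, hq2, hb2, ← hq]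
      ring
  rw [swap_mul_self] at h2
  intro σ hσ
  have hpair : |eschN p q a b σ| = |eschN p q a b (swap 0 1 * σ)| := by
    rcases perm_fin_three_cases σ with rfl | rfl | rfl | rfl | rfl | rfl <;>
      simp [swap_mul_self_mul, h0, h1, h2]
  rw [hpair]
  exact h _ (by rw [Perm.sign_mul, Perm.sign_swap (by decide), hσ, neg_mul, one_mul, neg_neg])

theorem regularVertices_of_exists_eq (hpq : ∑ i, p i = ∑ i, q i) (hab : ∑ i, a i = ∑ i, b i)
    (hq : ∃ i j, i ≠ j ∧ q i = q j) (hcurv : AvoidsHull q p ∨ AvoidsHull p q) {s : ℤˣ}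
    (h : RegularVertices p q a b s) (t : ℤˣ) : RegularVertices p q a b t := by
  obtain ⟨i, j, hij, hq⟩ := hq
  obtain ⟨π, rfl, rfl⟩ := exists_perm_apply_zero_apply_one_s7 hij
  rw [← regularVertices_comp_perm_iff hpq hab π] at h ⊢
  obtain rfl | rfl : t = s ∨ t = -s := by
    rcases Int.units_eq_one_or s with rfl | rfl <;> rcases Int.units_eq_one_or t with rfl | rfl <;>
      simp
  · exact h
  · exact regularVertices_neg_of_eq (by simpa [Equiv.sum_comp] using hpq)
      (by simpa [Equiv.sum_comp] using hab) hq (hcurv.imp (·.comp_perm π) (·.comp_perm π)) h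

end Eschenburg

theorem cohomogeneity_two_positive_curvature_free_general
    (p q a b : Fin 3 → ℤ)
    (hpq : p 0 + p 1 + p 2 = q 0 + q 1 + q 2)
    (hab : a 0 + a 1 + a 2 = b 0 + b 1 + b 2)
    (hcoh : (∃ i j : Fin 3, i ≠ j ∧ p i = p j) ∨ (∃ i j : Fin 3, i ≠ j ∧ q i = q j))
    (hreg : (∀ σ : Equiv.Perm (Fin 3), Equiv.Perm.sign σ = 1 → |eschN p q a b σ| = 1) ∨
      (∀ σ : Equiv.Perm (Fin 3), Equiv.Perm.sign σ = -1 → |eschN p q a b σ| = 1))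
    (hposcurv :
      (∀ i : Fin 3, q i ∉
        Set.Icc (min (p 0) (min (p 1) (p 2))) (max (p 0) (max (p 1) (p 2)))) ∨
      (∀ i : Fin 3, p i ∉
        Set.Icc (min (q 0) (min (q 1) (q 2))) (max (q 0) (max (q 1) (q 2))))) :
    ∀ σ : Equiv.Perm (Fin 3), |eschN p q a b σ| = 1 := by
  rw [← Fin.sum_univ_three p, ← Fin.sum_univ_three q] at hpq
  rw [← Fin.sum_univ_three a, ← Fin.sum_univ_three b] at hab
  have hcurv : AvoidsHull q p ∨ AvoidsHull p q :=
    hposcurv.imp avoidsHull_of_forall_not_mem_Icc avoidsHull_of_forall_not_mem_Icc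
  obtain ⟨s, hs⟩ : ∃ s, RegularVertices p q a b s := hreg.elim (⟨1, ·⟩) (⟨-1, ·⟩)
  have hall : ∀ t, RegularVertices p q a b t := by
    rcases hcoh with hp | hq
    · exact fun t => (regularVertices_of_exists_eq hpq.symm hab.symm hp hcurv.symm
        (hs.swap hpq hab) t).swap hpq.symm hab.symm
    · exact regularVertices_of_exists_eq hpq hab hq hcurv hs
  exact fun σ => hall _ σ rfl

/-- **Proposition 4.1 in arithmetic form.** Let `E⁷_{p,q}` be a cohomogeneity-two
Eschenburg orbifold (two entries of `p` or of `q` coincide) with an almost free circle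
action (`N σ ≠ 0` for all `σ`), such that three vertices of the same parity are regular
(`|N σ| = 1` for all even `σ`, or for all odd `σ`), and such that `E⁷_{p,q}` or
`E⁷_{q,p}` admits positive curvature. Then `|N σ| = 1` for every permutation `σ`: the
`2`-torus acts freely on `SU(3)` and the quotient is a smooth manifold. -/
theorem cohomogeneity_two_positive_curvature_free
    (p q a b : Fin 3 → ℤ)
    (hpq : p 0 + p 1 + p 2 = q 0 + q 1 + q 2)
    (hab : a 0 + a 1 + a 2 = b 0 + b 1 + b 2)
    (hcoh : (∃ i j : Fin 3, i ≠ j ∧ p i = p j) ∨ (∃ i j : Fin 3, i ≠ j ∧ q i = q j))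
    (hfree : ∀ σ : Equiv.Perm (Fin 3), eschN p q a b σ ≠ 0)
    (hreg : (∀ σ : Equiv.Perm (Fin 3), Equiv.Perm.sign σ = 1 → |eschN p q a b σ| = 1) ∨
      (∀ σ : Equiv.Perm (Fin 3), Equiv.Perm.sign σ = -1 → |eschN p q a b σ| = 1))
    (hposcurv :
      (∀ i : Fin 3, q i ∉
        Set.Icc (min (p 0) (min (p 1) (p 2))) (max (p 0) (max (p 1) (p 2)))) ∨
      (∀ i : Fin 3, p i ∉
        Set.Icc (min (q 0) (min (q 1) (q 2))) (max (q 0) (max (q 1) (q 2))))) :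
    ∀ σ : Equiv.Perm (Fin 3), |eschN p q a b σ| = 1 :=
  cohomogeneity_two_positive_curvature_free_general p q a b hpq hab hcoh hreg hposcurv
end

section
/- Let c, d, e, y, t, l, r ∈ ℤ and set x := c + e. Assume x ≠ 0, y ≠ 0, t ∈ {−1, 1}, l ∈ {−1, 1}, r ∈ {0, 2} with r = 2 only if t = 1, x·y − l > 0, and d·(x·y − l) = t·x − e·(c·y + r). Then: (1) if d·e > 0 and c·x > 0, then c and e have the same sign, |c| = 1 or |e| = 1, t = 1, r = 0, and |y| = 1; (2) if d·e < 0, then c·y + r ≥ 0. (Paper: Corollary 4.3.) -/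
/-!
Since `x·y > l ≥ -1` and `x, y ≠ 0`, the integers `x` and `y` have the same sign, and the
substitution `(c, d, e, y) ↦ (-c, -d, -e, -y)` preserves every hypothesis and every conclusion;
so we may take `x, y ≥ 1`. Then `D := x·y - l ≥ 1`, and everything follows by comparing the sign
and size of both sides of `d·D = t·x - e·(c·y + r)`. In (1), `c > 0`; if `e < 0` the right side
is at least `-x + c = -e > 0` while `d < 0`, so `e, d > 0`, and `D ≤ d·D` forces
`(x + c·e)·y ≤ x + 1`, hence `c = e = 1` and then `3y ≤ 2t + l - r ≤ 3`. In (2), `c·y + r < 0`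
would give `c < 0`, `e = x - c ≥ 2`, `d < 0`, and then `x·(y - 1) ≤ -1`.
-/

namespace Eschenburg

variable {c d e y t l r : ℤ}

theorem mul_pos_of_sub_pos_of_ne_zero (hx : c + e ≠ 0) (hy : y ≠ 0) (hl : -1 ≤ l)
    (hpos : 0 < (c + e) * y - l) : 0 < (c + e) * y :=
  lt_of_le_of_ne (by omega) (mul_ne_zero hx hy).symm

theorem e_pos (hx : 0 < c + e) (hy : 0 < y) (hc : 0 < c) (ht : -1 ≤ t) (hr : 0 ≤ r)
    (hpos : 0 < (c + e) * y - l)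
    (heq : d * ((c + e) * y - l) = t * (c + e) - e * (c * y + r)) (hde : 0 < d * e) :
    0 < e := by
  by_contra! he
  have he : e < 0 := lt_of_le_of_ne he (right_ne_zero_of_mul hde.ne')
  have hlhs : d * ((c + e) * y - l) < 0 := mul_neg_of_neg_of_pos (neg_of_mul_pos_left hde he.le) hpos
  have hcy : c ≤ c * y + r := by nlinarith
  nlinarith [mul_nonneg (by omega : (0 : ℤ) ≤ t + 1) hx.le,
    mul_nonneg (by omega : (0 : ℤ) ≤ -e - 1) (hc.le.trans hcy)]

theorem c_eq_one_and_e_eq_one (hc : 0 < c) (he : 0 < e) (hd : 0 < d) (hy : 0 < y) (ht : t ≤ 1)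
    (hl : l ≤ 1) (hr : 0 ≤ r) (hpos : 0 < (c + e) * y - l)
    (heq : d * ((c + e) * y - l) = t * (c + e) - e * (c * y + r)) :
    c = 1 ∧ e = 1 := by
  have hD : (c + e) * y - l ≤ d * ((c + e) * y - l) := le_mul_of_one_le_left hpos.le hd
  have hy' : (c + e + c * e) * y ≤ c + e + 1 := by
    nlinarith [mul_nonneg (by omega : (0 : ℤ) ≤ 1 - t) (by omega : (0 : ℤ) ≤ c + e),
      mul_nonneg he.le hr]
  have hce : c * e = 1 := by nlinarith [mul_pos hc he]
  exact ⟨Int.eq_one_of_mul_eq_one_right hc.le hce, Int.eq_one_of_mul_eq_one_left he.le hce⟩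

theorem c_mul_y_add_r_nonneg (hx : 0 < c + e) (hy : 0 < y) (ht : -1 ≤ t) (hl : l ≤ 1)
    (hr : 0 ≤ r) (hpos : 0 < (c + e) * y - l)
    (heq : d * ((c + e) * y - l) = t * (c + e) - e * (c * y + r)) (hde : d * e < 0) :
    0 ≤ c * y + r := by
  by_contra! hneg
  have hc : c < 0 := by nlinarith
  have he : 2 ≤ e := by omega
  have hd : d < 0 := neg_of_mul_neg_left hde (by omega)
  have hlhs : d * ((c + e) * y - l) ≤ -((c + e) * y - l) := by nlinarith
  have hrhs : e * (c * y + r) ≤ -2 := by nlinarith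
  nlinarith [mul_nonneg hx.le (by omega : (0 : ℤ) ≤ y - 1),
    mul_nonneg (by omega : (0 : ℤ) ≤ t + 1) hx.le]

theorem corollary_of_pos (hx : 0 < c + e) (hy : 0 < y) (ht₀ : -1 ≤ t) (ht₁ : t ≤ 1) (hl : l ≤ 1)
    (hr : 0 ≤ r) (hpos : 0 < (c + e) * y - l)
    (heq : d * ((c + e) * y - l) = t * (c + e) - e * (c * y + r)) :
    (d * e > 0 → c * (c + e) > 0 →
      c * e > 0 ∧ (|c| = 1 ∨ |e| = 1) ∧ t = 1 ∧ r = 0 ∧ |y| = 1) ∧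
    (d * e < 0 → 0 ≤ c * y + r) := by
  refine ⟨fun hde hcx => ?_, c_mul_y_add_r_nonneg hx hy ht₀ hl hr hpos heq⟩
  have hc : 0 < c := pos_of_mul_pos_left hcx hx.le
  have he : 0 < e := e_pos hx hy hc ht₀ hr hpos heq hde
  have hd : 0 < d := pos_of_mul_pos_left hde he.le
  obtain ⟨rfl, rfl⟩ := c_eq_one_and_e_eq_one hc he hd hy ht₁ hl hr hpos heq
  have hy' : 3 * y ≤ 2 * t + l - r := by linarith [le_mul_of_one_le_left hpos.le hd]
  obtain ⟨rfl, rfl, rfl⟩ : y = 1 ∧ t = 1 ∧ r = 0 := by omega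
  norm_num

end Eschenburg

open Eschenburg in
/-- **Corollary 4.3.** With `x := c + e`, assume `x ≠ 0`, `y ≠ 0`, `t, l ∈ {−1, 1}`,
`r ∈ {0, 2}` with `r = 2` only if `t = 1`, `x·y − l > 0`, and
`d·(x·y − l) = t·x − e·(c·y + r)`. Then:
(1) if `d·e > 0` and `c·x > 0`, then `c` and `e` have the same sign, `|c| = 1` or
`|e| = 1`, `t = 1`, `r = 0` and `|y| = 1`;
(2) if `d·e < 0`, then `c·y + r ≥ 0`. -/
theorem eschenburg_integrality_corollary
    (c d e y t l r : ℤ)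
    (hx : c + e ≠ 0) (hy : y ≠ 0)
    (ht : t = -1 ∨ t = 1) (hl : l = -1 ∨ l = 1)
    (hr : r = 0 ∨ (r = 2 ∧ t = 1))
    (hpos : 0 < (c + e) * y - l)
    (heq : d * ((c + e) * y - l) = t * (c + e) - e * (c * y + r)) :
    (d * e > 0 → c * (c + e) > 0 →
      c * e > 0 ∧ (|c| = 1 ∨ |e| = 1) ∧ t = 1 ∧ r = 0 ∧ |y| = 1) ∧
    (d * e < 0 → 0 ≤ c * y + r) := by
  have ht₀ : -1 ≤ t := by omega
  have ht₁ : t ≤ 1 := by omega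
  have hl₀ : -1 ≤ l := by omega
  have hl₁ : l ≤ 1 := by omega
  have hr₀ : 0 ≤ r := by omega
  rcases mul_pos_iff.mp (mul_pos_of_sub_pos_of_ne_zero hx hy hl₀ hpos) with
    ⟨hx₀, hy₀⟩ | ⟨hx₀, hy₀⟩
  · exact corollary_of_pos hx₀ hy₀ ht₀ ht₁ hl₁ hr₀ hpos heq
  · have h := corollary_of_pos (c := -c) (d := -d) (e := -e) (y := -y) (by linarith) (by linarith)
      ht₀ ht₁ hl₁ hr₀ (by linear_combination hpos) (by linear_combination -heq)
    simpa only [← neg_add, neg_mul_neg, abs_neg] using h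
end

section
/- Arithmetic core of Lemma 4.5 (exclusion of c + d + e = 0): there are no integers c, x, y, t, l, r such that t ∈ {−1, 1}, l ∈ {−1, 1}, r ∈ {0, 2} with r = 2 only if t = 1, c ≠ 0, x ≠ 0, c ≠ x, gcd(c, x) = 1, y ≠ 0, and y·(c² − c·x + x²) = (l − t)·x + r·(x − c). -/
/-- **(Arithmetic core of Lemma 4.5: exclusion of `c + d + e = 0`.)** There are no
integers `c, x, y, t, l, r` with `t, l ∈ {−1, 1}`, `r ∈ {0, 2}` (`r = 2` only if
`t = 1`), `c ≠ 0`, `x ≠ 0`, `c ≠ x`, `gcd(c, x) = 1`, `y ≠ 0` and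
`y·(c² − c·x + x²) = (l − t)·x + r·(x − c)`. -/
theorem no_solution_c_add_d_add_e_eq_zero :
    ¬ ∃ c x y t l r : ℤ,
      (t = -1 ∨ t = 1) ∧ (l = -1 ∨ l = 1) ∧ (r = 0 ∨ (r = 2 ∧ t = 1)) ∧
      c ≠ 0 ∧ x ≠ 0 ∧ c ≠ x ∧ Int.gcd c x = 1 ∧ y ≠ 0 ∧
      y * (c ^ 2 - c * x + x ^ 2) = (l - t) * x + r * (x - c) := by
  rintro ⟨c, x, y, t, l, r, ht, hl, hr, hc, hx, hcx, hgcd, hy, heq⟩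
  have hco : IsCoprime c x := Int.isCoprime_iff_gcd_eq_one.mpr hgcd
  have hx2 : 1 ≤ x ^ 2 := by rcases lt_or_gt_of_ne hx with h | h <;> nlinarith
  have hc2 : 1 ≤ c ^ 2 := by rcases lt_or_gt_of_ne hc with h | h <;> nlinarith
  have hQpos : 0 < c ^ 2 - c * x + x ^ 2 := by nlinarith [sq_nonneg (2 * c - x)]
  -- coprimality facts
  have hQx : IsCoprime (c ^ 2 - c * x + x ^ 2) x := by
    have h1 : IsCoprime (c ^ 2) x := hco.pow_left
    have h2 : c ^ 2 - c * x + x ^ 2 = c ^ 2 + x * (x - c) := by ring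
    rw [h2]
    exact h1.add_mul_left_left _
  have hQc : IsCoprime (c ^ 2 - c * x + x ^ 2) c := by
    have h1 : IsCoprime (x ^ 2) c := hco.symm.pow_left
    have h2 : c ^ 2 - c * x + x ^ 2 = x ^ 2 + c * (c - x) := by ring
    rw [h2]
    exact h1.add_mul_left_left _
  have hQxc : IsCoprime (c ^ 2 - c * x + x ^ 2) (x - c) := by
    have h1 : IsCoprime c (x - c) := by
      have := hco.add_mul_left_right (-1)
      simpa [mul_comm, sub_eq_add_neg] using this
    have h2 : IsCoprime x (x - c) := by
      have := hco.symm.add_mul_left_right (-1)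
      have h3 : c + x * (-1) = -(x - c) := by ring
      rw [h3] at this
      simpa using this.neg_right
    have h4 : IsCoprime (c * x) (x - c) := h1.mul_left h2
    have h5 : c ^ 2 - c * x + x ^ 2 = c * x + (x - c) * (x - c) := by ring
    rw [h5]
    exact h4.add_mul_left_left _
  -- in each case, Q divides 2
  have hdvd : (c ^ 2 - c * x + x ^ 2) ∣ 2 := by
    rcases hr with hr0 | ⟨hr2, ht1⟩
    · rcases ht with ht | ht <;> rcases hl with hl | hl <;> subst ht hl hr0
      · exfalso
        have : y * (c ^ 2 - c * x + x ^ 2) = 0 := by linarith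
        rcases mul_eq_zero.mp this with h | h
        · exact hy h
        · omega
      · -- y Q = 2x
        have : (c ^ 2 - c * x + x ^ 2) ∣ 2 * x := ⟨y, by linarith⟩
        exact hQx.dvd_of_dvd_mul_right this
      · -- y Q = -2x
        have : (c ^ 2 - c * x + x ^ 2) ∣ 2 * (-x) := ⟨y, by linarith⟩
        exact (hQx.neg_right).dvd_of_dvd_mul_right this
      · exfalso
        have : y * (c ^ 2 - c * x + x ^ 2) = 0 := by linarith
        rcases mul_eq_zero.mp this with h | h
        · exact hy h
        · omega
    · subst ht1 hr2
      rcases hl with hl | hl <;> subst hl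
      · -- y Q = -2x + 2(x-c) = -2c
        have : (c ^ 2 - c * x + x ^ 2) ∣ 2 * (-c) := ⟨y, by linarith⟩
        exact (hQc.neg_right).dvd_of_dvd_mul_right this
      · -- y Q = 2(x-c)
        have : (c ^ 2 - c * x + x ^ 2) ∣ 2 * (x - c) := ⟨y, by linarith⟩
        exact hQxc.dvd_of_dvd_mul_right this
  have hQle : c ^ 2 - c * x + x ^ 2 ≤ 2 := Int.le_of_dvd (by norm_num) hdvd
  have hcb : -1 ≤ c ∧ c ≤ 1 := by constructor <;> nlinarith [sq_nonneg (2 * x - c)]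
  have hxb : -1 ≤ x ∧ x ≤ 1 := by constructor <;> nlinarith [sq_nonneg (2 * c - x)]
  obtain ⟨hc1, hc2'⟩ := hcb
  obtain ⟨hx1, hx2'⟩ := hxb
  interval_cases c <;> interval_cases x <;> simp_all
end

section
/- Let p, q, a, b : Fin 3 → ℤ satisfy p 1 + p 2 + p 3 = q 1 + q 2 + q 3 and a 1 + a 2 + a 3 = b 1 + b 2 + b 3. For unit complex numbers z, w ∈ Circle, the following are equivalent: (i) for every A in the special unitary group SU(3) = Matrix.specialUnitaryGroup (Fin 3) ℂ, the matrix identity diagonal(i ↦ z^(p i)·w^(a i)) * A * (diagonal(i ↦ z^(q i)·w^(b i)))⁻¹ = A holds; (ii) z^(p i − q j) · w^(a i − b j) = 1 for all i ≠ j in {1,2,3}. (Paper: characterization in Subsection 2.3 of the ineffective kernel of the biquotient torus action (z,w) ∗ A = zᵖwᵃ A w̄ᵇ z̄^q on SU(3).) -/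
open Matrix

lemma circle_coe_zpow (z : Circle) (n : ℤ) : ((z ^ n : Circle) : ℂ) = (z : ℂ) ^ n :=
  map_zpow' Circle.coeHom Circle.coe_inv z n

lemma circle_key (z w : Circle) (m n k l : ℤ) :
    z ^ (m - n) * w ^ (k - l) = 1 ↔
      (z : ℂ) ^ m * (w : ℂ) ^ k = (z : ℂ) ^ n * (w : ℂ) ^ l := by
  rw [← Circle.coe_inj, Circle.coe_mul, circle_coe_zpow, circle_coe_zpow, Circle.coe_one,
    zpow_sub₀ z.coe_ne_zero, zpow_sub₀ w.coe_ne_zero, div_mul_div_comm,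
    div_eq_one_iff_eq (mul_ne_zero (zpow_ne_zero _ z.coe_ne_zero) (zpow_ne_zero _ w.coe_ne_zero))]

lemma cyc_mem : (!![0,0,1;1,0,0;0,1,0] : Matrix (Fin 3) (Fin 3) ℂ) ∈
    Matrix.specialUnitaryGroup (Fin 3) ℂ := by
  rw [Matrix.mem_specialUnitaryGroup_iff]
  constructor
  · rw [Matrix.mem_unitaryGroup_iff]
    ext i j
    simp [Matrix.mul_apply, Fin.sum_univ_three, star_eq_conjTranspose, Matrix.one_apply]
    fin_cases i <;> fin_cases j <;> simp [Matrix.vecHead, Matrix.vecTail]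
  · simp [Matrix.det_fin_three]

lemma cyc2_mem : (!![0,1,0;0,0,1;1,0,0] : Matrix (Fin 3) (Fin 3) ℂ) ∈
    Matrix.specialUnitaryGroup (Fin 3) ℂ := by
  rw [Matrix.mem_specialUnitaryGroup_iff]
  constructor
  · rw [Matrix.mem_unitaryGroup_iff]
    ext i j
    simp [Matrix.mul_apply, Fin.sum_univ_three, star_eq_conjTranspose, Matrix.one_apply]
    fin_cases i <;> fin_cases j <;> simp [Matrix.vecHead, Matrix.vecTail]
  · simp [Matrix.det_fin_three]

/-- **(Subsection 2.3: the ineffective kernel of the biquotient torus action on `SU(3)`.)**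
For Eschenburg parameters `p, q, a, b` and unit complex numbers `z, w`, the pair `(z, w)`
acts trivially on every matrix of `SU(3)` under
`(z, w) ∗ A = diag(zᵖⁱwᵃⁱ) · A · diag(z^{qⁱ}w^{bⁱ})⁻¹` if and only if
`z^(p i − q j) · w^(a i − b j) = 1` for all `i ≠ j`. -/
theorem kernel_characterization
    (p q a b : Fin 3 → ℤ)
    (hpq : p 0 + p 1 + p 2 = q 0 + q 1 + q 2)
    (hab : a 0 + a 1 + a 2 = b 0 + b 1 + b 2)
    (z w : Circle) :
    (∀ A ∈ Matrix.specialUnitaryGroup (Fin 3) ℂ,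
        Matrix.diagonal (fun i => (z : ℂ) ^ (p i) * (w : ℂ) ^ (a i)) * A *
          (Matrix.diagonal (fun i => (z : ℂ) ^ (q i) * (w : ℂ) ^ (b i)))⁻¹ = A) ↔
      ∀ i j : Fin 3, i ≠ j → z ^ (p i - q j) * w ^ (a i - b j) = 1 := by
  have hne : ∀ (u : Circle) (n : ℤ), (u : ℂ) ^ n ≠ 0 := fun u n => zpow_ne_zero _ u.coe_ne_zero
  have hE : IsUnit (Matrix.diagonal (fun i => (z : ℂ) ^ (q i) * (w : ℂ) ^ (b i))).det := by
    rw [Matrix.det_diagonal, isUnit_iff_ne_zero, Fin.prod_univ_three]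
    exact mul_ne_zero (mul_ne_zero (mul_ne_zero (hne z _) (hne w _))
      (mul_ne_zero (hne z _) (hne w _))) (mul_ne_zero (hne z _) (hne w _))
  constructor
  · intro H
    have key : ∀ A ∈ Matrix.specialUnitaryGroup (Fin 3) ℂ, ∀ i j : Fin 3,
        ((z : ℂ) ^ (p i) * (w : ℂ) ^ (a i)) * A i j
          = A i j * ((z : ℂ) ^ (q j) * (w : ℂ) ^ (b j)) := by
      intro A hA i j
      have h2 : Matrix.diagonal (fun i => (z : ℂ) ^ (p i) * (w : ℂ) ^ (a i)) * A
          = A * Matrix.diagonal (fun i => (z : ℂ) ^ (q i) * (w : ℂ) ^ (b i)) := by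
        conv_lhs => rw [← Matrix.nonsing_inv_mul_cancel_right
          (Matrix.diagonal (fun i => (z : ℂ) ^ (q i) * (w : ℂ) ^ (b i)))
          (Matrix.diagonal (fun i => (z : ℂ) ^ (p i) * (w : ℂ) ^ (a i)) * A) hE]
        rw [H A hA]
      have h3 := congrFun (congrFun h2 i) j
      simpa [Matrix.diagonal_mul, Matrix.mul_diagonal] using h3
    intro i j hij
    rw [circle_key]
    fin_cases i <;> fin_cases j <;>
      first
        | exact absurd rfl hij
        | (simpa using key _ cyc2_mem 0 1)
        | (simpa using key _ cyc_mem 0 2)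
        | (simpa using key _ cyc_mem 1 0)
        | (simpa using key _ cyc2_mem 1 2)
        | (simpa using key _ cyc2_mem 2 0)
        | (simpa using key _ cyc_mem 2 1)
  · intro h A hA
    have h01 := (circle_key z w _ _ _ _).mp (h 0 1 (by decide))
    have h02 := (circle_key z w _ _ _ _).mp (h 0 2 (by decide))
    have h10 := (circle_key z w _ _ _ _).mp (h 1 0 (by decide))
    have h12 := (circle_key z w _ _ _ _).mp (h 1 2 (by decide))
    have h20 := (circle_key z w _ _ _ _).mp (h 2 0 (by decide))
    have h21 := (circle_key z w _ _ _ _).mp (h 2 1 (by decide))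
    have hd : ∀ i : Fin 3, (z : ℂ) ^ (p i) * (w : ℂ) ^ (a i)
        = (z : ℂ) ^ (p 0) * (w : ℂ) ^ (a 0) := by
      intro i
      fin_cases i
      · rfl
      · simpa using h12.trans h02.symm
      · simpa using h21.trans h01.symm
    have he : ∀ j : Fin 3, (z : ℂ) ^ (q j) * (w : ℂ) ^ (b j)
        = (z : ℂ) ^ (p 0) * (w : ℂ) ^ (a 0) := by
      intro j
      fin_cases j
      · simpa using h10.symm.trans (h12.trans h02.symm)
      · simpa using h01.symm
      · simpa using h02.symm
    have hDA : Matrix.diagonal (fun i => (z : ℂ) ^ (p i) * (w : ℂ) ^ (a i)) * A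
        = A * Matrix.diagonal (fun i => (z : ℂ) ^ (q i) * (w : ℂ) ^ (b i)) := by
      ext i j
      simp only [Matrix.diagonal_mul, Matrix.mul_diagonal]
      rw [hd i, he j, mul_comm]
    rw [hDA, Matrix.mul_nonsing_inv_cancel_right _ _ hE]
end

section
/- For all integers s, u, the cokernel of the 3×3 integer matrix A = [[0, 1 − u, 0], [0, 0, 1 − u], [−1, 1 − 2s + u, s(1 − s + u) − u²]], i.e. the quotient of ℤ³ by the ℤ-span of the columns of A, is isomorphic as an abelian group to (ℤ/(1 − u)ℤ) × (ℤ/(1 − u)ℤ); equivalently, the Smith normal form of A is diag(1, 1 − u, 1 − u). (Paper: Lemma 5.6, case (1) — the degree-4 relation matrix for the family (1) of Corollary 4.10, giving the stable orbifold cohomology group ℤ_{1−u}² of the singular 2-sphere.) -/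
/-!
Reducing the first two coordinates modulo `d` maps `ℤ³` onto `ℤ/d × ℤ/d` and kills the
columns `(0, 0, -1)`, `(d, 0, a)`, `(0, d, b)`. Conversely, a vector `(d x, d y, z)` in the
kernel is the combination with coefficients `(a x + b y - z, x, y)` of these columns,
since the entry `-1` absorbs any third coordinate. So the kernel is the column span, and the
cokernel is `ℤ/d × ℤ/d`.
-/

namespace Int

theorem cast_zmod_natAbs_eq_zero_iff (d x : ℤ) : (x : ZMod d.natAbs) = 0 ↔ d ∣ x := by
  rw [ZMod.intCast_zmod_eq_zero_iff_dvd, Int.natAbs_dvd]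

end Int

namespace RelationMatrix

def reduceFirstTwo (n : ℕ) : (Fin 3 → ℤ) →ₗ[ℤ] ZMod n × ZMod n where
  toFun v := ((v 0 : ZMod n), (v 1 : ZMod n))
  map_add' x y := by simp
  map_smul' c x := by simp

theorem reduceFirstTwo_surjective (n : ℕ) : Function.Surjective (reduceFirstTwo n) := by
  rintro ⟨a, b⟩
  obtain ⟨a, rfl⟩ := ZMod.intCast_surjective a
  obtain ⟨b, rfl⟩ := ZMod.intCast_surjective b
  exact ⟨![a, b, 0], rfl⟩

variable (d a b : ℤ)

theorem mulVec_apply (x : Fin 3 → ℤ) :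
    (!![0, d, 0; 0, 0, d; -1, a, b] : Matrix (Fin 3) (Fin 3) ℤ).mulVec x =
       ![d * x 1, d * x 2, -x 0 + a * x 1 + b * x 2] := by
  ext i
  fin_cases i <;> simp [Matrix.mulVec, dotProduct, Fin.sum_univ_three]

theorem ker_reduceFirstTwo :
    LinearMap.ker (reduceFirstTwo d.natAbs) =
      LinearMap.range (Matrix.mulVecLin !![0, d, 0; 0, 0, d; -1, a, b]) := by
  ext v
  simp only [LinearMap.mem_ker, LinearMap.mem_range, Matrix.mulVecLin_apply, mulVec_apply,
    reduceFirstTwo, LinearMap.coe_mk, AddHom.coe_mk, Prod.mk_eq_zero,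
    Int.cast_zmod_natAbs_eq_zero_iff]
  constructor
  · rintro ⟨⟨x, hx⟩, ⟨y, hy⟩⟩
    refine ⟨![a * x + b * y - v 2, x, y], ?_⟩
    ext i
    fin_cases i <;> simp [hx, hy, add_assoc]
  · rintro ⟨x, rfl⟩
    exact ⟨⟨x 1, rfl⟩, ⟨x 2, rfl⟩⟩

noncomputable def quotientRangeEquiv :
    ((Fin 3 → ℤ) ⧸ LinearMap.range (Matrix.mulVecLin !![0, d, 0; 0, 0, d; -1, a, b])) ≃ₗ[ℤ]
      ZMod d.natAbs × ZMod d.natAbs :=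
  (Submodule.quotEquivOfEq _ _ (ker_reduceFirstTwo d a b).symm).trans
    ((reduceFirstTwo d.natAbs).quotKerEquivOfSurjective (reduceFirstTwo_surjective _))

end RelationMatrix

/-- **Lemma 5.6, case (1).** For all integers `s, u`, the cokernel of the degree-4
relation matrix `[[0, 1 − u, 0], [0, 0, 1 − u], [−1, 1 − 2s + u, s(1 − s + u) − u²]]` is
isomorphic as an abelian group to `ℤ/(1 − u)ℤ × ℤ/(1 − u)ℤ`; equivalently, the Smith
normal form of the matrix is `diag(1, 1 − u, 1 − u)`. -/
theorem cokernel_case_one (s u : ℤ) :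
    Nonempty
      (((Fin 3 → ℤ) ⧸ LinearMap.range (Matrix.mulVecLin
          !![0, 1 - u, 0;
             0, 0, 1 - u;
             -1, 1 - 2 * s + u, s * (1 - s + u) - u ^ 2])) ≃+
        (ZMod (1 - u).natAbs × ZMod (1 - u).natAbs)) :=
  ⟨(RelationMatrix.quotientRangeEquiv (1 - u) (1 - 2 * s + u) (s * (1 - s + u) - u ^ 2)).toAddEquiv⟩
end

section
/- For all integers s, u, with k := u − 2s − 1, the cokernel of the 3×3 integer matrix A = [[2, −1 − u, 0], [0, 2, −1 − u], [1, u − 1, s(u − 1 − s) − u²]], i.e. the quotient of ℤ³ by the ℤ-span of the columns of A, is isomorphic as an abelian group to (ℤ/gcd(2, k)ℤ) × (ℤ/(k²/gcd(2, k))ℤ); equivalently, the Smith normal form of A is diag(1, gcd(2, k), k²/gcd(2, k)). (Paper: Lemma 5.6, case (3) — the degree-4 relation matrix for the family (3) of Corollary 4.10, giving stable orbifold cohomology ℤ_{gcd(2,k)} ⊕ ℤ_{k²/gcd(2,k)} of the singular 2-sphere.) -/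
/-- Cokernel of a matrix equivalent to `diag(1, d1, d2)`. -/
lemma coker_key (A P P' Q Q' : Matrix (Fin 3) (Fin 3) ℤ) (d1 d2 : ℤ)
    (hP : P * P' = 1) (hQ : Q * Q' = 1)
    (hD : P * A * Q = Matrix.diagonal ![1, d1, d2]) :
    Nonempty (((Fin 3 → ℤ) ⧸ LinearMap.range A.mulVecLin) ≃+
      (ZMod d1.natAbs × ZMod d2.natAbs)) := by
  classical
  set d : Fin 3 → ℤ := ![1, d1, d2] with hd
  have hP' : P' * P = 1 := mul_eq_one_comm.mp hP
  have hQ' : Q' * Q = 1 := mul_eq_one_comm.mp hQ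
  -- column operations do not change the range
  have hQtop : LinearMap.range Q.mulVecLin = ⊤ := by
    rw [LinearMap.range_eq_top]
    intro v
    refine ⟨Q'.mulVec v, ?_⟩
    rw [Matrix.mulVecLin_apply, Matrix.mulVec_mulVec, hQ, Matrix.one_mulVec]
  have hrange : LinearMap.range A.mulVecLin = LinearMap.range (A * Q).mulVecLin := by
    rw [Matrix.mulVecLin_mul, LinearMap.range_comp_of_range_eq_top _ hQtop]
  rw [hrange]
  -- the linear equivalence given by P
  let e : (Fin 3 → ℤ) ≃ₗ[ℤ] (Fin 3 → ℤ) :=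
    LinearEquiv.ofLinear P.mulVecLin P'.mulVecLin
      (by rw [← Matrix.mulVecLin_mul, hP, Matrix.mulVecLin_one])
      (by rw [← Matrix.mulVecLin_mul, hP', Matrix.mulVecLin_one])
  have hmap : (LinearMap.range (A * Q).mulVecLin).map (e : (Fin 3 → ℤ) →ₗ[ℤ] (Fin 3 → ℤ))
      = Submodule.pi Set.univ (fun i => Ideal.span {d i}) := by
    have hcoe : (e : (Fin 3 → ℤ) →ₗ[ℤ] (Fin 3 → ℤ)) = P.mulVecLin := rfl
    rw [hcoe, ← LinearMap.range_comp, ← Matrix.mulVecLin_mul, ← mul_assoc, hD]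
    ext x
    constructor
    · rintro ⟨v, rfl⟩ i -
      exact Ideal.mem_span_singleton.mpr
        ⟨v i, by rw [Matrix.mulVecLin_apply, Matrix.mulVec_diagonal]⟩
    · intro hx
      choose c hc using fun i => Ideal.mem_span_singleton.mp (hx i trivial)
      exact ⟨c, funext fun i => by
        rw [Matrix.mulVecLin_apply, Matrix.mulVec_diagonal, ← hc i]⟩
  let e2 := Submodule.Quotient.equiv _ _ e hmap
  let e3 := Submodule.quotientPi (fun i : Fin 3 => (Ideal.span {d i} : Submodule ℤ ℤ))
  let e4 := AddEquiv.piCongrRight fun i : Fin 3 => (Int.quotientSpanEquivZMod (d i)).toAddEquiv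
  -- project away the first (trivial) factor
  have hsub : Subsingleton (ZMod ((d 0).natAbs)) := by
    have : (d 0).natAbs = 1 := by rw [hd]; rfl
    rw [this]; infer_instance
  let f : (∀ i : Fin 3, ZMod ((d i).natAbs)) →+ ZMod d1.natAbs × ZMod d2.natAbs :=
    { toFun := fun v => (v 1, v 2), map_zero' := rfl, map_add' := fun _ _ => rfl }
  have hbij : Function.Bijective f := by
    constructor
    · intro v w h
      have h1 : v 1 = w 1 := congrArg Prod.fst h
      have h2 : v 2 = w 2 := congrArg Prod.snd h
      funext i
      fin_cases i
      · exact hsub.elim _ _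
      · exact h1
      · exact h2
    · intro p
      exact ⟨Fin.cons 0 (Fin.cons p.1 (Fin.cons p.2 (fun i => i.elim0))), rfl⟩
  let e5 := AddEquiv.ofBijective f hbij
  exact ⟨((e2.trans e3).toAddEquiv.trans e4).trans e5⟩

set_option maxHeartbeats 1600000 in
/-- **Lemma 5.6, case (3).** For all integers `s, u`, with `k := u − 2s − 1`, the cokernel
of the degree-4 relation matrix
`[[2, −1 − u, 0], [0, 2, −1 − u], [1, u − 1, s(u − 1 − s) − u²]]` is isomorphic as an
abelian group to `ℤ/gcd(2, k)ℤ × ℤ/(k²/gcd(2, k))ℤ`; equivalently, the Smith normal form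
of the matrix is `diag(1, gcd(2, k), k²/gcd(2, k))`. -/
theorem cokernel_case_three (s u : ℤ) (k : ℤ) (hk : k = u - 2 * s - 1) :
    Nonempty
      (((Fin 3 → ℤ) ⧸ LinearMap.range (Matrix.mulVecLin
          !![2, -1 - u, 0;
             0, 2, -1 - u;
             1, u - 1, s * (u - 1 - s) - u ^ 2])) ≃+
        (ZMod (Int.gcd 2 k) × ZMod (k ^ 2 / (Int.gcd 2 k : ℤ)).natAbs)) := by
  rcases Int.even_or_odd u with ⟨t, ht⟩ | ⟨t, ht⟩
  · -- u = t + t, k odd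
    have hgcd : Int.gcd 2 k = 1 := by
      have h2 : ¬ (2 ∣ k.natAbs) := by omega
      have : Int.gcd 2 k = Nat.gcd 2 k.natAbs := rfl
      rw [this]
      rcases (Nat.dvd_prime Nat.prime_two).mp (Nat.gcd_dvd_left 2 k.natAbs) with h | h
      · exact h
      · exact absurd (h ▸ Nat.gcd_dvd_right 2 k.natAbs) h2
    rw [hgcd]
    have hdiv : k ^ 2 / (((1 : ℕ) : ℤ)) = k ^ 2 := by norm_num
    rw [hdiv]
    exact coker_key _
      !![0, 0, 1; 0, 1, 0; 1, t + 2*t^2 + 2*s - 4*s*t + 2*s^2, -2]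
      !![2, -t - 2*t^2 - 2*s + 4*s*t - 2*s^2, 1; 0, 1, 0; 1, 0, 0]
      !![1, -t - 2*t^2 - s + 2*s*t - s^2, 1 + 4*t^2 + 2*s - 4*s*t + 2*s^2;
         0, -t, 1 + 2*t; 0, -1, 2]
      !![1, -1 + 2*t, -4*t^2 - s + 2*s*t - s^2; 0, 2, -1 - 2*t; 0, 1, -t]
      1 (k ^ 2)
      (by ext i j; fin_cases i <;> fin_cases j <;>
        simp [Matrix.mul_apply, Fin.sum_univ_succ, Matrix.one_apply] <;> ring)
      (by ext i j; fin_cases i <;> fin_cases j <;>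
        simp [Matrix.mul_apply, Fin.sum_univ_succ, Matrix.one_apply] <;> ring)
      (by subst hk ht; ext i j; fin_cases i <;> fin_cases j <;>
        simp [Matrix.mul_apply, Fin.sum_univ_succ, Matrix.diagonal] <;> ring)
  · -- u = 2t + 1, k = 2(t - s)
    have hgcd : Int.gcd 2 k = 2 := by
      have h2 : 2 ∣ k.natAbs := by omega
      have : Int.gcd 2 k = Nat.gcd 2 k.natAbs := rfl
      rw [this, Nat.gcd_eq_left h2]
    rw [hgcd]
    have hdiv : k ^ 2 / (((2 : ℕ) : ℤ)) = 2 * (t - s) ^ 2 := by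
      have hk2 : k ^ 2 = 2 * (2 * (t - s) ^ 2) := by rw [hk, ht]; ring
      rw [show (((2 : ℕ) : ℤ)) = 2 from rfl, hk2,
        Int.mul_ediv_cancel_left _ two_ne_zero]
    rw [hdiv]
    exact coker_key _
      !![0, 0, 1; 0, 1, 0; 1, 1 + 3*t, -2]
      !![2, -1 - 3*t, 1; 0, 1, 0; 1, 0, 0]
      !![1, -2*t, 1 + 2*t + 2*t^2 - 2*s*t + s^2; 0, 1, 1 + t; 0, 0, 1]
      !![1, 2*t, -1 - 4*t - 4*t^2 + 2*s*t - s^2; 0, 1, -1 - t; 0, 0, 1]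
      2 (2 * (t - s) ^ 2)
      (by ext i j; fin_cases i <;> fin_cases j <;>
        simp [Matrix.mul_apply, Fin.sum_univ_succ, Matrix.one_apply] <;> ring)
      (by ext i j; fin_cases i <;> fin_cases j <;>
        simp [Matrix.mul_apply, Fin.sum_univ_succ, Matrix.one_apply] <;> ring)
      (by subst hk ht; ext i j; fin_cases i <;> fin_cases j <;>
        simp [Matrix.mul_apply, Fin.sum_univ_succ, Matrix.diagonal] <;> ring)
end

section
/- For every integer a₂, the cokernel of the 3×3 integer matrix A = [[−2, 2a₂, 0], [0, −2, 2a₂], [0, 2a₂, 1 − 2a₂²]], i.e. the quotient of ℤ³ by the ℤ-span of the columns of A, is isomorphic as an abelian group to (ℤ/2ℤ) × (ℤ/2ℤ); equivalently, the Smith normal form of A is diag(1, 2, 2). (Paper: Lemma 5.6, case (5) — the degree-4 relation matrix for the family (5) of Corollary 4.10, a non-positively-curved family whose singular sphere has stable orbifold cohomology ℤ₂².) -/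
/-!
The map `x ↦ (x₀ + a x₁, x₁) mod 2` from `ℤ³` onto `(ℤ/2ℤ)²` kills every column of the
matrix, and its kernel `{x | x₀, x₁ even}` is spanned by `2e₀, 2e₁, e₂`, which are the images
under the matrix of `-e₀`, `(2a³ - a, 2a² - 1, 2a)` and `(a², a, 1)`. So the column span is
exactly this kernel and the cokernel is `(ℤ/2ℤ)²`.
-/

namespace CokernelCaseFive

open Matrix

def relMatrix (a : ℤ) : Matrix (Fin 3) (Fin 3) ℤ :=
  !![-2, 2 * a, 0;
     0, -2, 2 * a;
     0, 2 * a, 1 - 2 * a ^ 2]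

def parityMap (a : ℤ) : (Fin 3 → ℤ) →ₗ[ℤ] ZMod 2 × ZMod 2 :=
  ((Int.castAddHom (ZMod 2)).toIntLinearMap.comp
      (LinearMap.proj 0 + a • LinearMap.proj 1)).prod
    ((Int.castAddHom (ZMod 2)).toIntLinearMap.comp (LinearMap.proj 1))

@[simp]
theorem parityMap_apply (a : ℤ) (x : Fin 3 → ℤ) :
    parityMap a x = (((x 0 + a * x 1 : ℤ) : ZMod 2), ((x 1 : ℤ) : ZMod 2)) := by
  simp [parityMap]

theorem parityMap_surjective (a : ℤ) : Function.Surjective (parityMap a) := by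
  rintro ⟨u, v⟩
  refine ⟨![(u.val : ℤ) - a * v.val, v.val, 0], ?_⟩
  simp

theorem mem_ker_parityMap_iff (a : ℤ) (x : Fin 3 → ℤ) :
    x ∈ LinearMap.ker (parityMap a) ↔ 2 ∣ x 0 ∧ 2 ∣ x 1 := by
  simp only [LinearMap.mem_ker, parityMap_apply, Prod.mk_eq_zero,
    ZMod.intCast_zmod_eq_zero_iff_dvd, Nat.cast_ofNat]
  constructor
  · rintro ⟨h0, h1⟩
    exact ⟨(dvd_add_left (h1.mul_left a)).mp h0, h1⟩
  · rintro ⟨h0, h1⟩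
    exact ⟨h0.add (h1.mul_left a), h1⟩

theorem range_relMatrix_le_ker_parityMap (a : ℤ) :
    LinearMap.range (relMatrix a).mulVecLin ≤ LinearMap.ker (parityMap a) := by
  rw [range_mulVecLin, Submodule.span_le]
  rintro _ ⟨j, rfl⟩
  rw [SetLike.mem_coe, mem_ker_parityMap_iff]
  fin_cases j <;> simp [relMatrix]

theorem relMatrix_mulVec_eq_two_e₀ (a : ℤ) :
    relMatrix a *ᵥ ![-1, 0, 0] = ![2, 0, 0] := by
  ext i; fin_cases i <;> simp [relMatrix]

theorem relMatrix_mulVec_eq_two_e₁ (a : ℤ) :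
    relMatrix a *ᵥ ![2 * a ^ 3 - a, 2 * a ^ 2 - 1, 2 * a] = ![0, 2, 0] := by
  ext i; fin_cases i <;> simp [relMatrix] <;> ring

theorem relMatrix_mulVec_eq_e₂ (a : ℤ) :
    relMatrix a *ᵥ ![a ^ 2, a, 1] = ![0, 0, 1] := by
  ext i; fin_cases i <;> simp [relMatrix] <;> ring

theorem ker_parityMap_le_range_relMatrix (a : ℤ) :
    LinearMap.ker (parityMap a) ≤ LinearMap.range (relMatrix a).mulVecLin := by
  intro x hx
  obtain ⟨⟨k₀, hk₀⟩, ⟨k₁, hk₁⟩⟩ := (mem_ker_parityMap_iff a x).mp hx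
  refine ⟨k₀ • ![-1, 0, 0] + k₁ • ![2 * a ^ 3 - a, 2 * a ^ 2 - 1, 2 * a] +
    x 2 • ![a ^ 2, a, 1], ?_⟩
  simp only [mulVecLin_apply, mulVec_add, mulVec_smul, relMatrix_mulVec_eq_two_e₀,
    relMatrix_mulVec_eq_two_e₁, relMatrix_mulVec_eq_e₂]
  ext i; fin_cases i <;> simp [hk₀, hk₁, mul_comm]

theorem range_relMatrix_eq_ker_parityMap (a : ℤ) :
    LinearMap.range (relMatrix a).mulVecLin = LinearMap.ker (parityMap a) :=
  le_antisymm (range_relMatrix_le_ker_parityMap a) (ker_parityMap_le_range_relMatrix a)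

end CokernelCaseFive

/-- **Lemma 5.6, case (5).** For every integer `a₂`, the cokernel of the degree-4 relation
matrix `[[−2, 2a₂, 0], [0, −2, 2a₂], [0, 2a₂, 1 − 2a₂²]]` is isomorphic as an abelian
group to `ℤ/2ℤ × ℤ/2ℤ`; equivalently, the Smith normal form of the matrix is
`diag(1, 2, 2)`. -/
theorem cokernel_case_five (a₂ : ℤ) :
    Nonempty
      (((Fin 3 → ℤ) ⧸ LinearMap.range (Matrix.mulVecLin
          !![-2, 2 * a₂, 0;
             0, -2, 2 * a₂;
             0, 2 * a₂, 1 - 2 * a₂ ^ 2])) ≃+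
        (ZMod 2 × ZMod 2)) := by
  change Nonempty (((Fin 3 → ℤ) ⧸ LinearMap.range (CokernelCaseFive.relMatrix a₂).mulVecLin) ≃+ _)
  rw [CokernelCaseFive.range_relMatrix_eq_ker_parityMap]
  exact ⟨(LinearMap.quotKerEquivOfSurjective _
    (CokernelCaseFive.parityMap_surjective a₂)).toAddEquiv⟩
end

section
/- Let c, e, m, r ∈ ℤ with c ≠ 0 and c dividing e·m + 1, and set f := (e·m + 1)/c. Then the cokernel of the 3×3 integer matrix Ã = [[c·r, −m·r, 0], [0, c·r, −m·r], [e·(c·r − e), 2·e·f − e·m·r, −f²]], i.e. the quotient of ℤ³ by the ℤ-span of the columns of Ã, is isomorphic as an abelian group to (ℤ/rℤ) × (ℤ/rℤ); equivalently, the Smith normal form of Ã is diag(1, r, r). (Paper: Lemma 5.6, case (2) — the reduced degree-4 relation matrix for the family (2) of Corollary 4.10, giving stable orbifold cohomology ℤ_r² of the singular 2-sphere; note det à = −r².) -/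
set_option maxHeartbeats 2000000 in
/-- **Lemma 5.6, case (2).** Let `c, e, m, r ∈ ℤ` with `c ≠ 0` and `c ∣ e·m + 1`, and set
`f := (e·m + 1)/c`. The cokernel of the reduced degree-4 relation matrix
`[[c·r, −m·r, 0], [0, c·r, −m·r], [e·(c·r − e), 2·e·f − e·m·r, −f²]]` is isomorphic as an
abelian group to `ℤ/rℤ × ℤ/rℤ`; equivalently, its Smith normal form is `diag(1, r, r)`. -/
theorem cokernel_case_two (c e m r : ℤ) (hc : c ≠ 0) (hdvd : c ∣ e * m + 1)
    (f : ℤ) (hf : f = (e * m + 1) / c) :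
    Nonempty
      (((Fin 3 → ℤ) ⧸ LinearMap.range (Matrix.mulVecLin
          !![c * r, -(m * r), 0;
             0, c * r, -(m * r);
             e * (c * r - e), 2 * e * f - e * m * r, -f ^ 2])) ≃+
        (ZMod r.natAbs × ZMod r.natAbs)) := by
  have hcf : c * f = e * m + 1 := by rw [hf]; exact Int.mul_ediv_cancel' hdvd
  set n := r.natAbs with hn
  set A : Matrix (Fin 3) (Fin 3) ℤ :=
    !![c * r, -(m * r), 0;
       0, c * r, -(m * r);
       e * (c * r - e), 2 * e * f - e * m * r, -f ^ 2] with hA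
  set L : Matrix (Fin 3) (Fin 3) ℤ :=
    !![e, 0, (-1);
       (-2*c*e^2*m^3*r - 3*c*e*m^2*r + 1), 0, (2*c*e*m^3*r + 3*c*m^2*r);
       (-2*c^2*e^2*m^2*r + c^2*e*m*r), 1, (2*c^2*e*m^2*r - c^2*m*r)] with hL
  set Li : Matrix (Fin 3) (Fin 3) ℤ :=
    !![(2*c*e*m^3*r + 3*c*m^2*r), 1, 0;
       (2*c^2*e*m^2*r - c^2*m*r), 0, 1;
       (2*c*e^2*m^3*r + 3*c*e*m^2*r - 1), e, 0] with hLi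
  set Rm : Matrix (Fin 3) (Fin 3) ℤ :=
    !![(2*e*m^3 + 3*m^2), (-e*m*f + f), m*f^2;
       0, (-e^2*m), (e*m*f + f);
       (-2*c^2*e*m + c^2), (-c*e^2), (e^2*m + 2*e)] with hRm
  set Dm : Matrix (Fin 3) (Fin 3) ℤ := !![1, 0, 0; 0, r, 0; 0, 0, r] with hDm
  have hLiL : Li * L = 1 := by
    rw [hLi, hL, Matrix.one_fin_three]
    ext i j
    fin_cases i <;> fin_cases j <;>
      simp [Matrix.mul_apply, Fin.sum_univ_three, Matrix.vecHead, Matrix.vecTail] <;> ring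
  have hLLi : L * Li = 1 := by
    rw [hLi, hL, Matrix.one_fin_three]
    ext i j
    fin_cases i <;> fin_cases j <;>
      simp [Matrix.mul_apply, Fin.sum_univ_three, Matrix.vecHead, Matrix.vecTail] <;> ring
  have hAR : A * Rm = Li * Dm := by
    rw [hA, hRm, hLi, hDm]
    ext i j
    fin_cases i <;> fin_cases j <;>
      simp [Matrix.mul_apply, Fin.sum_univ_three, Matrix.vecHead, Matrix.vecTail]
    all_goals first
      | linear_combination (0 : ℤ) * hcf
      | linear_combination (-(e*m*r) + r) * hcf
      | linear_combination (m*r*f) * hcf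
      | linear_combination (e*m*r + r) * hcf
      | linear_combination (2*c*e*m*f - c*f + 2*e^2*m^2 + e*m - 1) * hcf
      | linear_combination (-(e^2*m*r) + e^2*f + e*r) * hcf
      | linear_combination (e*m*r*f) * hcf
  have hLA : L * A =
      !![e^2, (-2*e*f), f^2;
         r * (-2*c*e^3*m^3 - 3*c*e^2*m^2 + c), r * (4*e^3*m^4 + 10*e^2*m^3 + 6*e*m^2 - m),
           r * (-2*e^2*m^4*f - 5*e*m^3*f - 3*m^2*f);
         r * (-2*c^2*e^3*m^2 + c^2*e^2*m), r * (4*c*e^3*m^3 + 2*c*e^2*m^2 - 2*c*e*m + c),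
           r * (-2*e^3*m^4 - 3*e^2*m^3)] := by
    rw [hL, hA]
    ext i j
    fin_cases i <;> fin_cases j <;>
      simp [Matrix.mul_apply, Fin.sum_univ_three, Matrix.vecHead, Matrix.vecTail]
    all_goals first
      | linear_combination (0 : ℤ) * hcf
      | linear_combination (4*e^2*m^3*r + 6*e*m^2*r) * hcf
      | linear_combination (-2*e*m^3*r*f - 3*m^2*r*f) * hcf
      | linear_combination (4*c*e^2*m^2*r - 2*c*e*m*r) * hcf
      | linear_combination (-2*c*e*m^2*r*f + c*m*r*f - 2*e^2*m^3*r - e*m^2*r + m*r) * hcf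
  -- the linear map to (ZMod n)²
  let castL : ℤ →ₗ[ℤ] ZMod n := (Int.castAddHom (ZMod n)).toIntLinearMap
  let φ : (Fin 3 → ℤ) →ₗ[ℤ] ZMod n × ZMod n :=
    ((castL.comp (LinearMap.proj 1)).prod (castL.comp (LinearMap.proj 2))).comp
      (Matrix.mulVecLin L)
  have hφ : ∀ v, φ v = (((L.mulVec v 1 : ℤ) : ZMod n), ((L.mulVec v 2 : ℤ) : ZMod n)) :=
    fun v => rfl
  have hcast0 : ∀ x : ℤ, ((x : ZMod n) = 0) ↔ r ∣ x := by
    intro x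
    rw [ZMod.intCast_zmod_eq_zero_iff_dvd, hn]
    exact ⟨fun h => Int.natAbs_dvd.1 h, fun h => Int.natAbs_dvd.2 h⟩
  have hr0 : ((r : ℤ) : ZMod n) = 0 := (hcast0 r).2 dvd_rfl
  have hsurj : Function.Surjective φ := by
    rintro ⟨x, y⟩
    obtain ⟨x', rfl⟩ := ZMod.intCast_surjective x
    obtain ⟨y', rfl⟩ := ZMod.intCast_surjective y
    refine ⟨Li.mulVec ![0, x', y'], ?_⟩
    rw [hφ, Matrix.mulVec_mulVec, hLLi, Matrix.one_mulVec]
    simp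
  have hker : LinearMap.ker φ = LinearMap.range (Matrix.mulVecLin A) := by
    ext v
    simp only [LinearMap.mem_ker, LinearMap.mem_range, hφ, Prod.mk_eq_zero,
      Matrix.mulVecLin_apply]
    constructor
    · rintro ⟨h2, h3⟩
      obtain ⟨b, hb⟩ := (hcast0 _).1 h2
      obtain ⟨b', hb'⟩ := (hcast0 _).1 h3
      refine ⟨Rm.mulVec ![L.mulVec v 0, b, b'], ?_⟩
      rw [Matrix.mulVec_mulVec, hAR, ← Matrix.mulVec_mulVec]
      have hD : Dm.mulVec ![L.mulVec v 0, b, b'] = L.mulVec v := by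
        funext i
        fin_cases i
        · simp [hDm, Matrix.mulVec, dotProduct, Fin.sum_univ_three, Matrix.vecHead,
            Matrix.vecTail]
        · simpa [hDm, Matrix.mulVec, dotProduct, Fin.sum_univ_three, Matrix.vecHead,
            Matrix.vecTail] using hb.symm
        · simpa [hDm, Matrix.mulVec, dotProduct, Fin.sum_univ_three, Matrix.vecHead,
            Matrix.vecTail] using hb'.symm
      rw [hD, Matrix.mulVec_mulVec, hLiL, Matrix.one_mulVec]
    · rintro ⟨x, rfl⟩
      rw [Matrix.mulVec_mulVec, hLA]
      constructor <;>
        · simp [Matrix.mulVec, dotProduct, Fin.sum_univ_three, Matrix.vecHead,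
            Matrix.vecTail]
          push_cast
          rw [hr0]
          ring
  exact ⟨((Submodule.quotEquivOfEq _ _ hker.symm).trans
    (φ.quotKerEquivOfSurjective hsurj)).toAddEquiv⟩
end
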